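/- arXiv:2508.14538 — 3 statements merged into one kernel-verified Lean document; each statement's English description precedes it below -/
import Mathlib

section
/- Let A be a supersolvable central hyperplane arrangement of rank n ≥ 3 with decomposition A = A₀ ⊎ A₁ as in the Björner–Edelman–Ziegler theorem. Then for every region R of A, the fiber F(R) = π⁻¹(π(R)) induces a path of length |A₁| in the tope graph of A, and each hyperplane of A₁ occurs exactly once as the type of an edge along this path. -/
noncomputable section

/-- The linear functional `x ↦ ∑ j, α j * x j` on `ℝⁿ`. -/
def dotL {n : ℕ} (α : Fin n → ℝ) : (Fin n → ℝ) →ₗ[ℝ] ℝ :=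
  ∑ j, α j • LinearMap.proj j

/-- The linear hyperplane with normal vector `α`, as a submodule. -/
def hypSub {n : ℕ} (α : Fin n → ℝ) : Submodule ℝ (Fin n → ℝ) :=
  LinearMap.ker (dotL α)

/-- The complement of the union of the hyperplanes of the arrangement `A`. -/
def complementA {n : ℕ} {ι : Type*} (A : ι → Fin n → ℝ) : Set (Fin n → ℝ) :=
  {x | ∀ i, dotL (A i) x ≠ 0}

/-- `R` is a region of the central arrangement `A`: the closure of a connected
component of the complement. -/
def isRegion {n : ℕ} {ι : Type*} (A : ι → Fin n → ℝ) (R : Set (Fin n → ℝ)) : Prop :=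
  ∃ x ∈ complementA A, R = closure (connectedComponentIn (complementA A) x)

/-- The sign (tope entry) of a region `R` at the hyperplane indexed by `i`:
`true` iff `R` lies in the nonnegative closed halfspace of `A i`. -/
def tope {n : ℕ} {ι : Type*} (A : ι → Fin n → ℝ) (R : Set (Fin n → ℝ)) (i : ι) : Bool :=
  @decide (R ⊆ {x | 0 ≤ dotL (A i) x}) (Classical.propDecidable _)

/-- The tope graph of a central arrangement: vertices are the regions, two regions
adjacent iff their sign vectors differ in exactly one hyperplane. -/
def topeGraph {n : ℕ} {ι : Type*} (A : ι → Fin n → ℝ) :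
    SimpleGraph {R : Set (Fin n → ℝ) // isRegion A R} :=
  SimpleGraph.fromRel (fun R S => ∃! i : ι, tope A R.1 i ≠ tope A S.1 i)

/-- A graph has a Hamiltonian cycle. -/
def HasHamCycle {V : Type*} (G : SimpleGraph V) : Prop :=
  letI := Classical.decEq V
  ∃ (v : V) (c : G.Walk v v), c.IsHamiltonianCycle

/-- The intersection lattice of a central arrangement: all intersections of
subsets of hyperplanes (ordered by reverse inclusion). -/
def interLattice {n : ℕ} {ι : Type*} [Fintype ι] (A : ι → Fin n → ℝ) :
    Set (Submodule ℝ (Fin n → ℝ)) :=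
  {X | ∃ s : Finset ι, X = ⨅ i ∈ s, hypSub (A i)}

/-- The meet of `v` and `w` in the intersection lattice (with respect to the
reverse-inclusion order): the intersection of all hyperplanes containing both,
i.e. the smallest lattice element containing the subspace sum `v ⊔ w`. -/
def latMeet {n : ℕ} {ι : Type*} [Fintype ι] (A : ι → Fin n → ℝ)
    (v w : Submodule ℝ (Fin n → ℝ)) : Submodule ℝ (Fin n → ℝ) :=
  ⨅ i ∈ {i : ι | v ≤ hypSub (A i) ∧ w ≤ hypSub (A i)}, hypSub (A i)

/-- The rank of a lattice element, i.e. its codimension in `ℝⁿ`. -/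
def corank {n : ℕ} (X : Submodule ℝ (Fin n → ℝ)) : ℕ :=
  n - Module.finrank ℝ X

/-- `v` is a modular element of the intersection lattice of `A`: for every lattice
element `w`, the ranks satisfy `rk(v ∨ w) + rk(v ∧ w) = rk v + rk w` (the lattice
join being the subspace intersection `v ⊓ w`, the lattice meet being `latMeet`). -/
def IsModular {n : ℕ} {ι : Type*} [Fintype ι] (A : ι → Fin n → ℝ)
    (v : Submodule ℝ (Fin n → ℝ)) : Prop :=
  v ∈ interLattice A ∧
    ∀ w ∈ interLattice A,
      corank (v ⊓ w) + corank (latMeet A v w) = corank v + corank w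

/-- The rank of a central arrangement: the codimension of the intersection of all
its hyperplanes. -/
def rankA {n : ℕ} {ι : Type*} (A : ι → Fin n → ℝ) : ℕ :=
  n - Module.finrank ℝ ↥(⨅ i, hypSub (A i))

/-- A central arrangement is supersolvable if its intersection lattice contains a
maximal chain of modular elements (one of each rank `0, 1, …, rank A`). -/
def IsSupersolvable {n : ℕ} {ι : Type*} [Fintype ι] (A : ι → Fin n → ℝ) : Prop :=
  ∃ v : Fin (rankA A + 1) → Submodule ℝ (Fin n → ℝ),
    (∀ k l : Fin (rankA A + 1), k ≤ l → v l ≤ v k) ∧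
    ∀ k : Fin (rankA A + 1),
      v k ∈ interLattice A ∧ IsModular A (v k) ∧ corank (v k) = (k : ℕ)


section Helpers


lemma dotL_apply {n : ℕ} (α x : Fin n → ℝ) : dotL α x = ∑ j, α j * x j := by
  simp [dotL]

lemma dotL_single {n : ℕ} (α : Fin n → ℝ) (j : Fin n) :
    dotL α (Pi.single j 1) = α j := by
  rw [dotL_apply]
  rw [Finset.sum_eq_single j]
  · simp
  · intro k _ hk; simp [Pi.single_apply, hk]
  · simp

lemma dotL_ne_zero {n : ℕ} {α : Fin n → ℝ} (h : α ≠ 0) : dotL α ≠ 0 := by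
  intro h0
  apply h
  funext j
  have := congrFun (congrArg (fun f : (Fin n → ℝ) →ₗ[ℝ] ℝ => (f : (Fin n → ℝ) → ℝ)) h0) (Pi.single j 1)
  simpa [dotL_single] using this

lemma finrank_hypSub {n : ℕ} {α : Fin n → ℝ} (h : α ≠ 0) :
    Module.finrank ℝ (hypSub α) = n - 1 := by
  have hne := dotL_ne_zero h
  have hsurj : LinearMap.range (dotL α) = ⊤ := by
    rcases LinearMap.surjective_of_ne_zero hne with hs
    exact LinearMap.range_eq_top.mpr hs
  have := LinearMap.finrank_range_add_finrank_ker (dotL α)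
  rw [hsurj] at this
  simp only [finrank_top] at this
  have h1 : Module.finrank ℝ ℝ = 1 := Module.finrank_self ℝ
  have h2 : Module.finrank ℝ (Fin n → ℝ) = n := by simp
  rw [h1, h2] at this
  unfold hypSub
  omega

lemma continuous_dotL {n : ℕ} (α : Fin n → ℝ) : Continuous (dotL α) :=
  (dotL α).continuous_of_finiteDimensional

/-- the (open) cell of `x` w.r.t. hyperplanes indexed by `s`. -/
def cellA {n : ℕ} {ι : Type*} (A : ι → Fin n → ℝ) (s : Set ι) (x : Fin n → ℝ) :
    Set (Fin n → ℝ) :=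
  {y | ∀ i ∈ s, 0 < dotL (A i) x * dotL (A i) y}

lemma cell_convex {n : ℕ} {ι : Type*} (A : ι → Fin n → ℝ) (s : Set ι) (x : Fin n → ℝ) :
    Convex ℝ (cellA A s x) := by
  intro y hy z hz a b ha hb hab
  intro i hi
  have h1 := hy i hi
  have h2 := hz i hi
  have : dotL (A i) (a • y + b • z) = a * dotL (A i) y + b * dotL (A i) z := by
    simp [mul_comm]
  rw [this, mul_add]
  rcases eq_or_lt_of_le ha with h | h
  · subst h
    have hb1 : b = 1 := by linarith
    subst hb1
    simpa [mul_comm, mul_left_comm] using h2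
  · have : 0 < dotL (A i) x * (a * dotL (A i) y) := by
      have := mul_pos h h1; nlinarith
    have h2' : 0 ≤ dotL (A i) x * (b * dotL (A i) z) := by nlinarith
    linarith

lemma cell_self {n : ℕ} {ι : Type*} {A : ι → Fin n → ℝ} {s : Set ι} {x : Fin n → ℝ}
    (hx : ∀ i ∈ s, dotL (A i) x ≠ 0) : x ∈ cellA A s x := by
  intro i hi
  exact mul_self_pos.mpr (hx i hi)

lemma cell_subset_complement {n : ℕ} {ι : Type*} {A : ι → Fin n → ℝ} {x : Fin n → ℝ} :
    cellA A Set.univ x ⊆ complementA A := by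
  intro y hy i
  intro h0
  have := hy i (Set.mem_univ i)
  rw [h0, mul_zero] at this
  exact lt_irrefl 0 this

lemma component_eq_cell {n : ℕ} {ι : Type*} {A : ι → Fin n → ℝ} {x : Fin n → ℝ}
    (hx : x ∈ complementA A) :
    connectedComponentIn (complementA A) x = cellA A Set.univ x := by
  apply Set.Subset.antisymm
  · -- component ⊆ cell
    intro y hy i _
    by_contra hle
    push_neg at hle
    have hyc : y ∈ complementA A := connectedComponentIn_subset _ _ hy
    have hxel : x ∈ connectedComponentIn (complementA A) x :=
      mem_connectedComponentIn hx
    have hpre : IsPreconnected (connectedComponentIn (complementA A) x) :=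
      (isConnected_connectedComponentIn_iff.mpr hx).isPreconnected
    have himg : IsPreconnected (dotL (A i) '' connectedComponentIn (complementA A) x) :=
      hpre.image _ ((continuous_dotL (A i)).continuousOn)
    have hord := himg.ordConnected
    have hxi : dotL (A i) x ∈ dotL (A i) '' _ := Set.mem_image_of_mem _ hxel
    have hyi : dotL (A i) y ∈ dotL (A i) '' _ := Set.mem_image_of_mem _ hy
    have hx0 : dotL (A i) x ≠ 0 := hx i
    have hy0 : dotL (A i) y ≠ 0 := hyc i
    have hzero : (0:ℝ) ∈ dotL (A i) '' connectedComponentIn (complementA A) x := by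
      have hlt : dotL (A i) x * dotL (A i) y < 0 := lt_of_le_of_ne hle (by
        intro h; exact hx0 (by
          rcases mul_eq_zero.mp h with h | h
          · exact h
          · exact absurd h hy0))
      rcases lt_trichotomy (dotL (A i) x) 0 with h1 | h1 | h1
      · have h2 : 0 < dotL (A i) y := by nlinarith
        exact hord.out hxi hyi ⟨le_of_lt h1, le_of_lt h2⟩
      · exact absurd h1 hx0
      · have h2 : dotL (A i) y < 0 := by nlinarith
        exact hord.out hyi hxi ⟨le_of_lt h2, le_of_lt h1⟩
    rcases hzero with ⟨z, hz, hz0⟩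
    exact (connectedComponentIn_subset _ _ hz) i hz0
  · -- cell ⊆ component
    apply (cell_convex A Set.univ x).isPreconnected.subset_connectedComponentIn
      (cell_self (fun i _ => hx i)) cell_subset_complement

lemma cell_eq_of_sign {n : ℕ} {ι : Type*} {A : ι → Fin n → ℝ} {s : Set ι} {x y : Fin n → ℝ}
    (h : ∀ i ∈ s, 0 < dotL (A i) x * dotL (A i) y) : cellA A s x = cellA A s y := by
  ext z
  constructor
  · intro hz i hi
    have h1 := h i hi
    have h2 := hz i hi
    nlinarith [mul_pos h1 h2, sq_nonneg (dotL (A i) x)]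
  · intro hz i hi
    have h1 := h i hi
    have h2 := hz i hi
    nlinarith [mul_pos h1 h2, sq_nonneg (dotL (A i) y)]

lemma tope_region {n : ℕ} {ι : Type*} {A : ι → Fin n → ℝ} {x : Fin n → ℝ}
    (hx : x ∈ complementA A) (i : ι) :
    tope A (closure (connectedComponentIn (complementA A) x)) i = true ↔ 0 < dotL (A i) x := by
  simp only [tope, decide_eq_true_eq]
  constructor
  · intro hsub
    have hxmem : x ∈ closure (connectedComponentIn (complementA A) x) :=
      subset_closure (mem_connectedComponentIn hx)
    have := hsub hxmem
    exact lt_of_le_of_ne this (fun h => (hx i) h.symm)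
  · intro hpos
    apply closure_minimal
    · rw [component_eq_cell hx]
      intro y hy
      have := hy i (Set.mem_univ i)
      have : 0 < dotL (A i) y := by nlinarith
      exact le_of_lt this
    · exact isClosed_le continuous_const (continuous_dotL (A i))

lemma bool_eq_bool {a b : Bool} {P Q : Prop} (ha : a = true ↔ P) (hb : b = true ↔ Q)
    (h : P ↔ Q) : a = b := by
  rcases Bool.eq_false_or_eq_true a with h1 | h1 <;>
    rcases Bool.eq_false_or_eq_true b with h2 | h2 <;> subst h1 <;> subst h2 <;> simp_all

lemma bool_ne_bool {a b : Bool} {P Q : Prop} (ha : a = true ↔ P) (hb : b = true ↔ Q)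
    (h : P ↔ ¬ Q) : a ≠ b := by
  rcases Bool.eq_false_or_eq_true a with h1 | h1 <;>
    rcases Bool.eq_false_or_eq_true b with h2 | h2 <;> subst h1 <;> subst h2 <;> simp_all

lemma gen_vec {n : ℕ} {ι : Type*} (X : Submodule ℝ (Fin n → ℝ))
    (f : ι → (Fin n → ℝ) →ₗ[ℝ] ℝ) (t : Finset ι)
    (h : ∀ i ∈ t, ∃ w ∈ X, f i w ≠ 0) :
    ∃ v ∈ X, ∀ i ∈ t, f i v ≠ 0 := by
  classical
  induction t using Finset.induction_on with
  | empty => exact ⟨0, X.zero_mem, by simp⟩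
  | @insert i t hit ih =>
    obtain ⟨v, hvX, hv⟩ := ih (fun j hj => h j (Finset.mem_insert_of_mem hj))
    obtain ⟨w, hwX, hw⟩ := h i (Finset.mem_insert_self i t)
    obtain ⟨c, hc⟩ := Infinite.exists_notMem_finset
      ((insert i t).image (fun j => -(f j v) / (f j w)))
    refine ⟨v + c • w, X.add_mem hvX (X.smul_mem c hwX), ?_⟩
    intro j hj
    have hval : f j (v + c • w) = f j v + c * f j w := by simp
    rw [hval]
    by_cases hjw : f j w = 0
    · rw [hjw, mul_zero, add_zero]
      rcases Finset.mem_insert.mp hj with rfl | hjt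
      · exact absurd hjw hw
      · exact hv j hjt
    · intro h0
      apply hc
      refine Finset.mem_image.mpr ⟨j, hj, ?_⟩
      field_simp
      linarith

lemma sign_mul_iff {c d : ℝ} (hc : c ≠ 0) (hd : d ≠ 0) :
    0 < c * d ↔ (0 < c ↔ 0 < d) := by
  rw [mul_pos_iff]
  constructor
  · rintro (⟨h1, h2⟩ | ⟨h1, h2⟩) <;> constructor <;> intro h <;> first | assumption | linarith
  · intro h
    by_cases h1 : 0 < c
    · exact Or.inl ⟨h1, h.mp h1⟩
    · refine Or.inr ⟨lt_of_le_of_ne (not_lt.mp h1) hc, ?_⟩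
      rcases lt_or_gt_of_ne hd with h2 | h2
      · exact h2
      · exact absurd (h.mpr h2) h1

lemma initial_seg {q : ℕ} (t : Fin q → ℝ) (hmono : ∀ j j' : Fin q, j < j' → t j < t j')
    (j : Fin q) :
    (t j < 0 ↔ (j : ℕ) < (Finset.univ.filter (fun j : Fin q => t j < 0)).card) := by
  classical
  constructor
  · intro hj
    have hsub : Finset.Iic j ⊆ Finset.univ.filter (fun j : Fin q => t j < 0) := by
      intro j' hj'
      rw [Finset.mem_Iic] at hj'
      rw [Finset.mem_filter]
      refine ⟨Finset.mem_univ _, ?_⟩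
      rcases eq_or_lt_of_le hj' with rfl | h
      · exact hj
      · exact lt_trans (hmono _ _ h) hj
    have := Finset.card_le_card hsub
    rw [Fin.card_Iic] at this
    omega
  · intro hj
    by_contra hnot
    have hsub : Finset.univ.filter (fun j : Fin q => t j < 0) ⊆ Finset.Iio j := by
      intro j' hj'
      rw [Finset.mem_filter] at hj'
      rw [Finset.mem_Iio]
      by_contra hge
      push_neg at hge
      rcases eq_or_lt_of_le hge with rfl | h
      · exact hnot hj'.2
      · exact hnot (lt_trans (hmono _ _ h) hj'.2)
    have := Finset.card_le_card hsub
    rw [Fin.card_Iio] at this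
    omega

end Helpers

set_option maxHeartbeats 2000000 in
/-- Let `A = A₀ ⊎ A₁` be a Björner–Edelman–Ziegler decomposition of a supersolvable
central arrangement of rank `≥ 3` (indices in `s₀` resp. `s₁`). Then every fiber
(the set of regions of `A` having the same `A₀`-signs) induces a path of length
`|A₁|` in the tope graph, along which each hyperplane of `A₁` occurs exactly once
as the type of an edge. -/
theorem stmt12 {n m : ℕ} (A : Fin m → Fin n → ℝ) (hA : ∀ i, A i ≠ 0)
    (hdist : ∀ i j : Fin m, i ≠ j → hypSub (A i) ≠ hypSub (A j))
    (s₀ s₁ : Finset (Fin m)) (hdisj : Disjoint s₀ s₁) (hunion : s₀ ∪ s₁ = Finset.univ)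
    (hne : s₁.Nonempty) (hrank : 3 ≤ rankA A)
    (hrank₀ : rankA (fun i : s₀ => A i) = rankA A - 1)
    (hss₀ : IsSupersolvable (fun i : s₀ => A i))
    (hBEZ : ∀ i ∈ s₁, ∀ j ∈ s₁, i ≠ j → ∃ k ∈ s₀,
      hypSub (A i) ⊓ hypSub (A j) ≤ hypSub (A k)) :
    ∀ R : Set (Fin n → ℝ), isRegion A R →
      ∃ p : Fin (s₁.card + 1) → {S : Set (Fin n → ℝ) // isRegion A S},
        Function.Injective p ∧
        (∀ S : {S : Set (Fin n → ℝ) // isRegion A S},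
          (∀ i ∈ s₀, tope A S.1 i = tope A R i) ↔ S ∈ Set.range p) ∧
        ∃ ty : Fin s₁.card → Fin m,
          Function.Injective ty ∧ (∀ k, ty k ∈ s₁) ∧
          ∀ k : Fin s₁.card, ∀ i : Fin m,
            (tope A (p k.castSucc).1 i ≠ tope A (p k.succ).1 i ↔ i = ty k) := by
  classical
  intro R hR
  obtain ⟨xR, hxR, hReq⟩ := hR
  set q := s₁.card with hq
  have hq1 : 1 ≤ q := Finset.card_pos.mpr hne
  obtain ⟨i₀, hi₀⟩ := hne
  have : Nonempty (Fin m) := ⟨i₀⟩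
  -- the modular coatom X = ∩ A₀
  set X : Submodule ℝ (Fin n → ℝ) := ⨅ i : {i // i ∈ s₀}, hypSub (A ↑i) with hXdef
  have hXle : ∀ k ∈ s₀, X ≤ hypSub (A k) := fun k hk => iInf_le (fun i : {i // i ∈ s₀} => hypSub (A ↑i)) ⟨k, hk⟩
  have hfle : ∀ (W : Submodule ℝ (Fin n → ℝ)), Module.finrank ℝ W ≤ n := by
    intro W
    have := W.finrank_le
    simpa using this
  have hrk : n - Module.finrank ℝ ↥(⨅ i, hypSub (A i)) = rankA A := rfl
  have hrkX : n - Module.finrank ℝ ↥X = rankA A - 1 := hrank₀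
  have hIA : (⨅ i, hypSub (A i)) ≤ X := le_iInf fun k => iInf_le _ k.1
  have hn3 : 3 ≤ n := by
    have := hfle (⨅ i, hypSub (A i))
    omega
  have hfH : ∀ i, Module.finrank ℝ ↥(hypSub (A i)) = n - 1 := fun i => finrank_hypSub (hA i)
  -- no hyperplane of A₁ contains X
  have hXnot : ∀ i ∈ s₁, ¬ X ≤ hypSub (A i) := by
    have hex : ∃ j ∈ s₁, ¬ X ≤ hypSub (A j) := by
      by_contra hcon
      push_neg at hcon
      have hXleAll : X ≤ ⨅ i, hypSub (A i) := by
        apply le_iInf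
        intro i
        have : i ∈ s₀ ∪ s₁ := by rw [hunion]; exact Finset.mem_univ i
        rcases Finset.mem_union.mp this with h | h
        · exact hXle i h
        · exact hcon i h
      have heq : X = ⨅ i, hypSub (A i) := le_antisymm hXleAll hIA
      have : Module.finrank ℝ ↥X = Module.finrank ℝ ↥(⨅ i, hypSub (A i)) := by rw [heq]
      have h1 := hfle X
      have h2 := hfle (⨅ i, hypSub (A i))
      omega
    intro i hi hXi
    obtain ⟨j, hj, hXj⟩ := hex
    have hij : i ≠ j := fun h => hXj (h ▸ hXi)
    obtain ⟨k, hk, hijk⟩ := hBEZ i hi j hj hij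
    obtain ⟨x0, hx0X, hx0j⟩ := SetLike.not_le_iff_exists.mp hXj
    set W := X ⊔ (hypSub (A i) ⊓ hypSub (A j)) with hWdef
    have hWle : W ≤ hypSub (A i) := sup_le hXi inf_le_left
    have hlt : hypSub (A i) ⊓ hypSub (A j) < W := by
      refine lt_of_le_of_ne le_sup_right ?_
      intro hcon
      have : x0 ∈ hypSub (A i) ⊓ hypSub (A j) := by
        rw [hcon]
        exact Submodule.mem_sup_left hx0X
      exact hx0j this.2
    have hinf : n - 2 ≤ Module.finrank ℝ ↥(hypSub (A i) ⊓ hypSub (A j)) := by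
      have heq := Submodule.finrank_sup_add_finrank_inf_eq (hypSub (A i)) (hypSub (A j))
      have h1 := hfle (hypSub (A i) ⊔ hypSub (A j))
      have h2 := hfH i
      have h3 := hfH j
      omega
    have hWfin : n - 1 ≤ Module.finrank ℝ ↥W := by
      have := Submodule.finrank_lt_finrank_of_lt hlt
      omega
    have hWeq : W = hypSub (A i) :=
      Submodule.eq_of_le_of_finrank_le hWle (by rw [hfH i]; exact hWfin)
    have hik : hypSub (A i) ≤ hypSub (A k) := by
      rw [← hWeq]
      exact sup_le (hXle k hk) hijk
    have : hypSub (A i) = hypSub (A k) :=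
      Submodule.eq_of_le_of_finrank_le hik (by rw [hfH i, hfH k])
    have hki : k ≠ i := by
      intro h
      subst h
      exact (Finset.disjoint_left.mp hdisj) hk hi
    exact hdist k i hki this.symm
  -- a generic direction v ∈ X
  obtain ⟨v, hvX, hv⟩ := gen_vec X (fun i => dotL (A i)) s₁ (by
    intro i hi
    obtain ⟨w, hwX, hwi⟩ := SetLike.not_le_iff_exists.mp (hXnot i hi)
    exact ⟨w, hwX, fun h => hwi (LinearMap.mem_ker.mpr h)⟩)
  have hv0 : ∀ k ∈ s₀, dotL (A k) v = 0 := fun k hk => LinearMap.mem_ker.mp (hXle k hk hvX)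
  -- crossing parameters
  set κ : (Fin n → ℝ) → Fin m → ℝ := fun z i => -(dotL (A i) z) / (dotL (A i) v) with hκdef
  have hkey : ∀ i ∈ s₁, ∀ (z : Fin n → ℝ) (t : ℝ),
      dotL (A i) (z + t • v) = dotL (A i) v * (t - κ z i) := by
    intro i hi z t
    have hvi := hv i hi
    have : dotL (A i) (z + t • v) = dotL (A i) z + t * dotL (A i) v := by simp
    rw [this]
    show dotL (A i) z + t * dotL (A i) v
        = dotL (A i) v * (t - (-(dotL (A i) z) / (dotL (A i) v)))
    field_simp
    ring
  have hs₀base : ∀ (t : ℝ) (k), k ∈ s₀ → dotL (A k) (xR + t • v) = dotL (A k) xR := by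
    intro t k hk
    have : dotL (A k) (xR + t • v) = dotL (A k) xR + t * dotL (A k) v := by simp
    rw [this, hv0 k hk, mul_zero, add_zero]
  -- crossing parameters are distinct within a chamber of A₀
  have hcross : ∀ z, (∀ k ∈ s₀, dotL (A k) z ≠ 0) →
      ∀ i ∈ s₁, ∀ j ∈ s₁, i ≠ j → κ z i ≠ κ z j := by
    intro z hz i hi j hj hij heq
    obtain ⟨k, hk, hijk⟩ := hBEZ i hi j hj hij
    set w := z + (κ z i) • v with hwdef
    have hwi : dotL (A i) w = 0 := by rw [hkey i hi]; ring
    have hwj : dotL (A j) w = 0 := by rw [hkey j hj, heq]; ring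
    have hwk : dotL (A k) w = 0 := by
      have : w ∈ hypSub (A i) ⊓ hypSub (A j) := ⟨LinearMap.mem_ker.mpr hwi, LinearMap.mem_ker.mpr hwj⟩
      exact LinearMap.mem_ker.mp (hijk this)
    have : dotL (A k) w = dotL (A k) z := by
      rw [hwdef]
      have : dotL (A k) (z + (κ z i) • v) = dotL (A k) z + (κ z i) * dotL (A k) v := by simp
      rw [this, hv0 k hk, mul_zero, add_zero]
    exact hz k hk (by rw [← this, hwk])
  have hxR₀ : ∀ k ∈ s₀, dotL (A k) xR ≠ 0 := fun k _ => hxR k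
  have hinjOn : Set.InjOn (κ xR) ↑s₁ := by
    intro i hi j hj heq
    by_contra hij
    exact hcross xR hxR₀ i hi j hj hij heq
  -- the sorted crossing values
  have hTcard : (s₁.image (κ xR)).card = q := Finset.card_image_of_injOn hinjOn
  set u : Fin q ≃o {x // x ∈ s₁.image (κ xR)} := (s₁.image (κ xR)).orderIsoOfFin hTcard
    with hudef
  have humono : ∀ j j' : Fin q, j < j' → (u j : ℝ) < (u j' : ℝ) := by
    intro j j' h
    exact_mod_cast u.strictMono h
  set ty : Fin q → Fin m := fun j => Function.invFunOn (κ xR) ↑s₁ ((u j : ℝ)) with htydef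
  have huT : ∀ j : Fin q, ∃ i ∈ (↑s₁ : Set (Fin m)), κ xR i = (u j : ℝ) := by
    intro j
    have : (u j : ℝ) ∈ s₁.image (κ xR) := (u j).2
    obtain ⟨i, hi, hκi⟩ := Finset.mem_image.mp this
    exact ⟨i, hi, hκi⟩
  have hty_mem : ∀ j, ty j ∈ s₁ := fun j => Function.invFunOn_mem (huT j)
  have hty_val : ∀ j, κ xR (ty j) = (u j : ℝ) := fun j => Function.invFunOn_eq (huT j)
  have hty_inj : Function.Injective ty := by
    intro j j' h
    have : (u j : ℝ) = (u j' : ℝ) := by rw [← hty_val j, ← hty_val j', h]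
    exact u.injective (Subtype.ext this)
  have hty_surj : ∀ i ∈ s₁, ∃ j, ty j = i := by
    intro i hi
    have hiT : κ xR i ∈ s₁.image (κ xR) := Finset.mem_image_of_mem _ hi
    refine ⟨u.symm ⟨κ xR i, hiT⟩, ?_⟩
    apply hinjOn (hty_mem _) hi
    rw [hty_val]
    simp
  -- choice of intermediate parameters τ
  have humle : ∀ j j' : Fin q, j ≤ j' → (u j : ℝ) ≤ (u j' : ℝ) := by
    intro j j' h
    rcases eq_or_lt_of_le h with rfl | h
    · exact le_refl _
    · exact (humono j j' h).le
  have hτex : ∀ k : Fin (q + 1), ∃ c : ℝ,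
      ∀ j : Fin q, ((u j : ℝ) < c ↔ (j : ℕ) < (k : ℕ)) ∧ (u j : ℝ) ≠ c := by
    intro k
    rcases Nat.eq_zero_or_pos (k : ℕ) with hk0 | hkpos
    · refine ⟨(u ⟨0, hq1⟩ : ℝ) - 1, fun j => ?_⟩
      have h0j : (u ⟨0, hq1⟩ : ℝ) ≤ u j := humle _ _ (by simp [Fin.le_def])
      constructor
      · constructor
        · intro h; linarith
        · intro h; omega
      · intro h; linarith
    · by_cases hkq : (k : ℕ) = q
      · refine ⟨(u ⟨q - 1, by omega⟩ : ℝ) + 1, fun j => ?_⟩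
        have hjle : (u j : ℝ) ≤ u ⟨q - 1, by omega⟩ := by
          apply humle
          rw [Fin.le_def]
          have := j.isLt
          simp
          omega
        constructor
        · constructor
          · intro _
            have := j.isLt
            omega
          · intro _; linarith
        · intro h; linarith
      · have hk1 : 1 ≤ (k : ℕ) := hkpos
        have hkq' : (k : ℕ) < q := by
          have := k.isLt
          omega
        set jlo : Fin q := ⟨(k : ℕ) - 1, by omega⟩ with hjlo
        set jhi : Fin q := ⟨(k : ℕ), hkq'⟩ with hjhi
        have hlohi : (u jlo : ℝ) < u jhi := humono _ _ (by rw [Fin.lt_def]; show (k : ℕ) - 1 < (k : ℕ); omega)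
        refine ⟨((u jlo : ℝ) + (u jhi : ℝ)) / 2, fun j => ?_⟩
        by_cases hj : (j : ℕ) < (k : ℕ)
        · have : (u j : ℝ) ≤ u jlo := humle _ _ (by rw [Fin.le_def]; simp [hjlo]; omega)
          constructor
          · constructor
            · intro _; exact hj
            · intro _; linarith
          · intro h; linarith
        · have : (u jhi : ℝ) ≤ u j := humle _ _ (by rw [Fin.le_def]; simp [hjhi]; omega)
          constructor
          · constructor
            · intro h; linarith
            · intro h; exact absurd h hj
          · intro h; linarith
  choose τ hτ using hτex
  set y : Fin (q + 1) → (Fin n → ℝ) := fun k => xR + (τ k) • v with hydef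
  have hys₀ : ∀ k, ∀ i ∈ s₀, dotL (A i) (y k) = dotL (A i) xR := by
    intro k i hi
    exact hs₀base (τ k) i hi
  have hys₁ : ∀ (k : Fin (q+1)) (j : Fin q),
      dotL (A (ty j)) (y k) = dotL (A (ty j)) v * (τ k - (u j : ℝ)) := by
    intro k j
    rw [hydef]
    simp only
    rw [hkey (ty j) (hty_mem j), hty_val j]
  have hys₁ne : ∀ (k : Fin (q+1)) (j : Fin q), dotL (A (ty j)) (y k) ≠ 0 := by
    intro k j
    rw [hys₁]
    exact mul_ne_zero (hv (ty j) (hty_mem j)) (sub_ne_zero.mpr (fun h => (hτ k j).2 h.symm))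
  have hsign : ∀ (k : Fin (q+1)) (j : Fin q),
      (0 < dotL (A (ty j)) (y k) ↔ ((0 < dotL (A (ty j)) v) ↔ ((j : ℕ) < (k : ℕ)))) := by
    intro k j
    rw [hys₁]
    rw [sign_mul_iff (hv (ty j) (hty_mem j))
      (sub_ne_zero.mpr (fun h => (hτ k j).2 h.symm))]
    rw [sub_pos, (hτ k j).1]
  have hy_compl : ∀ k, y k ∈ complementA A := by
    intro k i
    have : i ∈ s₀ ∪ s₁ := by rw [hunion]; exact Finset.mem_univ i
    rcases Finset.mem_union.mp this with h | h
    · rw [hys₀ k i h]; exact hxR i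
    · obtain ⟨j, rfl⟩ := hty_surj i h
      exact hys₁ne k j
  -- the path
  set p : Fin (q + 1) → {S : Set (Fin n → ℝ) // isRegion A S} := fun k =>
    ⟨closure (connectedComponentIn (complementA A) (y k)), ⟨y k, hy_compl k, rfl⟩⟩ with hpdef
  have htope : ∀ (k : Fin (q+1)) i, (tope A (p k).1 i = true ↔ 0 < dotL (A i) (y k)) :=
    fun k i => tope_region (hy_compl k) i
  have htopeR : ∀ i, (tope A R i = true ↔ 0 < dotL (A i) xR) := by
    intro i
    rw [hReq]
    exact tope_region hxR i
  have hps₀ : ∀ (k : Fin (q+1)), ∀ i ∈ s₀, tope A (p k).1 i = tope A R i := by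
    intro k i hi
    exact bool_eq_bool (htope k i) (htopeR i) (by rw [hys₀ k i hi])
  have hp_ne : ∀ k l : Fin (q + 1), k < l → p k ≠ p l := by
    intro k l hkl hcon
    have hkq : (k : ℕ) < q := by
      have := l.isLt
      omega
    set j : Fin q := ⟨k, hkq⟩ with hjdef
    have h1 := htope k (ty j)
    have h2 := htope l (ty j)
    have hne' : tope A (p k).1 (ty j) ≠ tope A (p l).1 (ty j) := by
      refine bool_ne_bool h1 h2 ?_
      rw [hsign k j, hsign l j]
      have e1 : ¬ ((j:ℕ) < (k:ℕ)) := by simp [hjdef]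
      have e2 : (j:ℕ) < (l:ℕ) := by
        have := hkl
        rw [Fin.lt_def] at this
        simp [hjdef]
        omega
      tauto
    exact hne' (by rw [hcon])
  have hp_inj : Function.Injective p := by
    intro k l h
    by_contra hne'
    rcases lt_or_gt_of_ne hne' with hlt | hlt
    · exact hp_ne k l hlt h
    · exact hp_ne l k hlt h.symm
  refine ⟨p, hp_inj, ?_, ⟨ty, hty_inj, hty_mem, ?_⟩⟩
  · intro S
    constructor
    · intro hS
      obtain ⟨xS, hxS, hSeq⟩ := S.2
      have hprod : ∀ k ∈ s₀, 0 < dotL (A k) xS * dotL (A k) xR := by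
        intro k hk
        have h1 : tope A S.1 k = true ↔ 0 < dotL (A k) xS := by
          rw [hSeq]; exact tope_region hxS k
        have hiff : 0 < dotL (A k) xS ↔ 0 < dotL (A k) xR := by
          rw [← h1, ← htopeR k, hS k hk]
        exact (sign_mul_iff (hxS k) (hxR k)).mpr hiff
      have hxSC : xS ∈ cellA A ↑s₀ xR := by
        intro k hk
        have := hprod k (Finset.mem_coe.mp hk)
        nlinarith
      have hxRC : xR ∈ cellA A ↑s₀ xR := cell_self (fun k _ => hxR k)
      have hmono : ∀ j j' : Fin q, j < j' → κ xS (ty j) < κ xS (ty j') := by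
        intro j j' hjj'
        set g : (Fin n → ℝ) → ℝ := fun z => κ z (ty j') - κ z (ty j) with hgdef
        have hgcont : Continuous g := by
          simp only [hgdef, hκdef]
          exact ((continuous_dotL (A (ty j'))).neg.div_const _).sub
            ((continuous_dotL (A (ty j))).neg.div_const _)
        have hgR : 0 < g xR := by
          simp only [hgdef]
          rw [hty_val, hty_val, sub_pos]
          exact humono j j' hjj'
        have hgne : ∀ z ∈ cellA A ↑s₀ xR, g z ≠ 0 := by
          intro z hz h0
          have hzne : ∀ k ∈ s₀, dotL (A k) z ≠ 0 := by
            intro k hk h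
            have := hz k (Finset.mem_coe.mpr hk)
            rw [h, mul_zero] at this
            exact lt_irrefl 0 this
          refine hcross z hzne (ty j) (hty_mem j) (ty j') (hty_mem j')
            (fun h2 => absurd (hty_inj h2) (ne_of_lt hjj')) ?_
          simp only [hgdef] at h0
          linarith [sub_eq_zero.mp h0]
        have hpre : IsPreconnected (g '' cellA A ↑s₀ xR) :=
          ((cell_convex A ↑s₀ xR).isPreconnected).image g hgcont.continuousOn
        rcases lt_trichotomy (g xS) 0 with hlt | h0 | hgt
        · exfalso
          have h0mem : (0:ℝ) ∈ g '' cellA A ↑s₀ xR :=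
            hpre.ordConnected.out (Set.mem_image_of_mem g hxSC)
              (Set.mem_image_of_mem g hxRC) ⟨hlt.le, hgR.le⟩
          obtain ⟨z, hz, hz0⟩ := h0mem
          exact hgne z hz hz0
        · exact absurd h0 (hgne xS hxSC)
        · simp only [hgdef] at hgt
          linarith
      have hne0 : ∀ j : Fin q, κ xS (ty j) ≠ 0 := by
        intro j
        simp only [hκdef]
        exact div_ne_zero (neg_ne_zero.mpr (hxS (ty j))) (hv (ty j) (hty_mem j))
      set kS : ℕ := (Finset.univ.filter (fun j : Fin q => κ xS (ty j) < 0)).card with hkSdef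
      have hkSle : kS ≤ q := by
        rw [hkSdef]
        calc (Finset.univ.filter (fun j : Fin q => κ xS (ty j) < 0)).card
            ≤ (Finset.univ : Finset (Fin q)).card := Finset.card_filter_le _ _
          _ = q := by simp
      set kF : Fin (q + 1) := ⟨kS, by omega⟩ with hkFdef
      have hinit : ∀ j : Fin q, (κ xS (ty j) < 0 ↔ (j : ℕ) < kS) :=
        fun j => initial_seg (fun j => κ xS (ty j)) hmono j
      have hsigns : ∀ i, 0 < dotL (A i) xS * dotL (A i) (y kF) := by
        intro i
        have : i ∈ s₀ ∪ s₁ := by rw [hunion]; exact Finset.mem_univ i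
        rcases Finset.mem_union.mp this with h | h
        · rw [hys₀ kF i h]
          exact hprod i h
        · obtain ⟨j, rfl⟩ := hty_surj i h
          have hxSval : dotL (A (ty j)) xS = dotL (A (ty j)) v * (0 - κ xS (ty j)) := by
            have := hkey (ty j) (hty_mem j) xS 0
            simpa using this
          refine (sign_mul_iff (hxS (ty j)) (hys₁ne kF j)).mpr ?_
          rw [hsign kF j]
          rw [hxSval]
          rw [sign_mul_iff (hv (ty j) (hty_mem j)) (by simpa using neg_ne_zero.mpr (hne0 j))]
          have : (0 : ℝ) < 0 - κ xS (ty j) ↔ κ xS (ty j) < 0 := by constructor <;> intro <;> linarith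
          rw [this, hinit j]
      have hSeq2 : S = p kF := by
        apply Subtype.ext
        rw [hSeq]
        show closure (connectedComponentIn (complementA A) xS)
            = closure (connectedComponentIn (complementA A) (y kF))
        rw [component_eq_cell hxS, component_eq_cell (hy_compl kF),
          cell_eq_of_sign (fun i _ => hsigns i)]
      exact ⟨kF, hSeq2.symm⟩
    · rintro ⟨k, rfl⟩ i hi
      exact hps₀ k i hi
  · intro k i
    have hi_mem : i ∈ s₀ ∪ s₁ := by rw [hunion]; exact Finset.mem_univ i
    rcases Finset.mem_union.mp hi_mem with h | h
    · have heq : tope A (p k.castSucc).1 i = tope A (p k.succ).1 i := by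
        rw [hps₀ _ i h, hps₀ _ i h]
      constructor
      · intro hne2
        exact absurd heq hne2
      · intro hik
        exact absurd (hik ▸ hty_mem k) (Finset.disjoint_left.mp hdisj h)
    · obtain ⟨j, rfl⟩ := hty_surj i h
      by_cases hjk : j = k
      · subst hjk
        have hlhs : tope A (p j.castSucc).1 (ty j) ≠ tope A (p j.succ).1 (ty j) := by
          refine bool_ne_bool (htope _ (ty j)) (htope _ (ty j)) ?_
          rw [hsign _ j, hsign _ j]
          have e1 : ¬ ((j : ℕ) < (j.castSucc : ℕ)) := by simp
          have e2 : (j : ℕ) < (j.succ : ℕ) := by simp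
          tauto
        simp [hlhs]
      · have hne3 : ty j ≠ ty k := fun h2 => hjk (hty_inj h2)
        have hlhs : tope A (p k.castSucc).1 (ty j) = tope A (p k.succ).1 (ty j) := by
          refine bool_eq_bool (htope _ (ty j)) (htope _ (ty j)) ?_
          rw [hsign _ j, hsign _ j]
          have hvne : (j : ℕ) ≠ (k : ℕ) := fun h2 => hjk (Fin.val_injective h2)
          have e1 : ((j : ℕ) < (k.castSucc : ℕ)) ↔ ((j : ℕ) < (k.succ : ℕ)) := by
            rw [Fin.coe_castSucc, Fin.val_succ]
            omega
          rw [e1]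
        simp [hlhs, hne3]
end
end

section
/- Let A = A₀ ⊎ A₁ be a supersolvable arrangement decomposition and orient all hyperplanes so that a fixed canonical base region B₀ lies on the positive side of every hyperplane. Then for every region B of A₀, the fiber π⁻¹(B) contains unique regions ε₊(B) and ε₋(B) whose sign vectors restricted to A₁ are all positive, respectively all negative, and these are the two endpoints of the path induced on the fiber. -/
noncomputable section

namespace Eps

variable {n : ℕ} {ι : Type*}

lemma dotL_apply (α x : Fin n → ℝ) : dotL α x = ∑ j, α j * x j := by
  simp [dotL, LinearMap.proj_apply]

lemma dotL_ne_zero {α : Fin n → ℝ} (h : α ≠ 0) : dotL α ≠ 0 := by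
  intro h0
  apply h
  funext j
  have := congrArg (fun φ : (Fin n → ℝ) →ₗ[ℝ] ℝ => φ (Pi.single j 1)) h0
  simp only [LinearMap.zero_apply] at this
  rw [dotL_apply] at this
  rw [Finset.sum_eq_single j (fun b _ hb => by simp [Pi.single_apply, hb]) (by simp)] at this
  simpa using this

lemma dotL_continuous (α : Fin n → ℝ) : Continuous (dotL α) :=
  (dotL α).continuous_of_finiteDimensional

/-- the open sign cell of `x` -/
def cellOf (A : ι → Fin n → ℝ) (x : Fin n → ℝ) : Set (Fin n → ℝ) :=
  {y | ∀ i, 0 < dotL (A i) x * dotL (A i) y}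

lemma cell_convex (A : ι → Fin n → ℝ) (x : Fin n → ℝ) : Convex ℝ (cellOf A x) := by
  have : cellOf A x = ⋂ i, {y | 0 < (dotL (A i) x • dotL (A i)) y} := by
    ext y; simp [cellOf, Set.mem_iInter, smul_eq_mul]
  rw [this]
  exact convex_iInter fun i => convex_halfSpace_gt (LinearMap.isLinear _) 0

lemma cell_subset_complement (A : ι → Fin n → ℝ) (x : Fin n → ℝ) :
    cellOf A x ⊆ complementA A := by
  intro y hy i h0
  have := hy i
  rw [h0, mul_zero] at this
  exact lt_irrefl 0 this

lemma mem_cell_self {A : ι → Fin n → ℝ} {x : Fin n → ℝ} (hx : x ∈ complementA A) :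
    x ∈ cellOf A x := fun i => mul_self_pos.mpr (hx i)

lemma comp_eq_cell {A : ι → Fin n → ℝ} {x : Fin n → ℝ} (hx : x ∈ complementA A) :
    connectedComponentIn (complementA A) x = cellOf A x := by
  apply Set.Subset.antisymm
  · intro y hy i
    have hconn : IsPreconnected (connectedComponentIn (complementA A) x) :=
      isPreconnected_connectedComponentIn
    have hxm : x ∈ connectedComponentIn (complementA A) x := mem_connectedComponentIn hx
    have hsub := connectedComponentIn_subset (complementA A) x
    have hxne : dotL (A i) x ≠ 0 := hx i
    have hyne : dotL (A i) y ≠ 0 := hsub hy i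
    by_contra hle
    push_neg at hle
    have hne0 : dotL (A i) x * dotL (A i) y ≠ 0 := mul_ne_zero hxne hyne
    have hneg : dotL (A i) x * dotL (A i) y < 0 := lt_of_le_of_ne hle hne0
    have hcont : ContinuousOn (dotL (A i)) (connectedComponentIn (complementA A) x) :=
      (dotL_continuous (A i)).continuousOn
    rcases mul_neg_iff.mp hneg with ⟨hx1, hy1⟩ | ⟨hx1, hy1⟩
    · obtain ⟨z, hz, hz0⟩ := hconn.intermediate_value₂ hy hxm hcont continuousOn_const
        (le_of_lt hy1) (le_of_lt hx1)
      exact hsub hz i hz0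
    · obtain ⟨z, hz, hz0⟩ := hconn.intermediate_value₂ hxm hy hcont continuousOn_const
        (le_of_lt hx1) (le_of_lt hy1)
      exact hsub hz i hz0
  · exact (cell_convex A x).isPreconnected.subset_connectedComponentIn
      (mem_cell_self hx) (cell_subset_complement A x)

end Eps

namespace Eps

variable {n : ℕ} {ι : Type*}

lemma sign_trans {a b c : ℝ} (hab : 0 < a * b) (hac : 0 < a * c) : 0 < b * c := by
  nlinarith [mul_pos hab hac, sq_nonneg a]

lemma closure_comp_subset {A : ι → Fin n → ℝ} {x : Fin n → ℝ} (hx : x ∈ complementA A) :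
    closure (connectedComponentIn (complementA A) x) ⊆
      {y | ∀ i, 0 ≤ dotL (A i) x * dotL (A i) y} := by
  rw [comp_eq_cell hx]
  apply closure_minimal
  · intro y hy i; exact le_of_lt (hy i)
  · have : {y : Fin n → ℝ | ∀ i, 0 ≤ dotL (A i) x * dotL (A i) y} =
        ⋂ i, {y | 0 ≤ dotL (A i) x * dotL (A i) y} := by
      ext y; simp
    rw [this]
    refine isClosed_iInter fun i => ?_
    exact isClosed_le continuous_const (continuous_const.mul (dotL_continuous (A i)))

/-- the region determined by a point of the complement -/
def regionOf (A : ι → Fin n → ℝ) (x : Fin n → ℝ) : Set (Fin n → ℝ) :=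
  closure (connectedComponentIn (complementA A) x)

lemma isRegion_regionOf {A : ι → Fin n → ℝ} {x : Fin n → ℝ} (hx : x ∈ complementA A) :
    isRegion A (regionOf A x) := ⟨x, hx, rfl⟩

lemma mem_regionOf {A : ι → Fin n → ℝ} {x : Fin n → ℝ} (hx : x ∈ complementA A) :
    x ∈ regionOf A x := subset_closure (mem_connectedComponentIn hx)

lemma tope_regionOf_true_iff {A : ι → Fin n → ℝ} {x : Fin n → ℝ} (hx : x ∈ complementA A)
    (i : ι) : tope A (regionOf A x) i = true ↔ 0 < dotL (A i) x := by
  simp only [tope, decide_eq_true_eq]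
  constructor
  · intro h
    have := h (mem_regionOf hx)
    exact lt_of_le_of_ne this (Ne.symm (hx i))
  · intro hpos y hy
    have h0 : 0 ≤ dotL (A i) x * dotL (A i) y := closure_comp_subset hx hy i
    show 0 ≤ dotL (A i) y
    nlinarith

lemma tope_regionOf_false_iff {A : ι → Fin n → ℝ} {x : Fin n → ℝ} (hx : x ∈ complementA A)
    (i : ι) : tope A (regionOf A x) i = false ↔ dotL (A i) x < 0 := by
  rw [← Bool.not_eq_true, tope_regionOf_true_iff hx i]
  constructor
  · intro h
    push_neg at h
    exact lt_of_le_of_ne h (hx i)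
  · intro h; push_neg; exact le_of_lt h

lemma regionOf_eq {A : ι → Fin n → ℝ} {x z : Fin n → ℝ} (hx : x ∈ complementA A)
    (hz : z ∈ complementA A) (hsame : ∀ i, 0 < dotL (A i) x * dotL (A i) z) :
    regionOf A x = regionOf A z := by
  unfold regionOf
  rw [comp_eq_cell hx, comp_eq_cell hz]
  have : cellOf A x = cellOf A z := by
    ext y
    constructor
    · intro hy i; exact sign_trans (hsame i) (hy i)
    · intro hy i
      have : 0 < dotL (A i) z * dotL (A i) x := by
        have := hsame i; nlinarith
      exact sign_trans this (hy i)
  rw [this]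

lemma tope_eq_of_sign {A : ι → Fin n → ℝ} {x z : Fin n → ℝ} (hx : x ∈ complementA A)
    (hz : z ∈ complementA A) {i : ι} (h : 0 < dotL (A i) x * dotL (A i) z) :
    tope A (regionOf A x) i = tope A (regionOf A z) i := by
  rcases lt_trichotomy (dotL (A i) x) 0 with h1 | h1 | h1
  · have h2 : dotL (A i) z < 0 := by nlinarith
    rw [(tope_regionOf_false_iff hx i).mpr h1, (tope_regionOf_false_iff hz i).mpr h2]
  · exact absurd h1 (hx i)
  · have h2 : 0 < dotL (A i) z := by nlinarith
    rw [(tope_regionOf_true_iff hx i).mpr h1, (tope_regionOf_true_iff hz i).mpr h2]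

lemma tope_ne_of_sign {A : ι → Fin n → ℝ} {x z : Fin n → ℝ} (hx : x ∈ complementA A)
    (hz : z ∈ complementA A) {i : ι} (h : dotL (A i) x * dotL (A i) z < 0) :
    tope A (regionOf A x) i ≠ tope A (regionOf A z) i := by
  rcases lt_trichotomy (dotL (A i) x) 0 with h1 | h1 | h1
  · have h2 : 0 < dotL (A i) z := by nlinarith
    rw [(tope_regionOf_false_iff hx i).mpr h1, (tope_regionOf_true_iff hz i).mpr h2]
    simp
  · exact absurd h1 (hx i)
  · have h2 : dotL (A i) z < 0 := by nlinarith
    rw [(tope_regionOf_true_iff hx i).mpr h1, (tope_regionOf_false_iff hz i).mpr h2]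
    simp

end Eps

namespace Eps

variable {n : ℕ}

lemma sq_pos' {a : ℝ} (h : a ≠ 0) : 0 < a ^ 2 :=
  lt_of_le_of_ne (sq_nonneg a) (Ne.symm (pow_ne_zero 2 h))

lemma dotL_add_smul (α x ℓ : Fin n → ℝ) (t : ℝ) :
    dotL α (x + t • ℓ) = dotL α x + t * dotL α ℓ := by
  simp [map_add, map_smul, smul_eq_mul]

lemma sweep {m : ℕ} {A : Fin m → Fin n → ℝ} {s₀ s₁ : Finset (Fin m)}
    (hBEZ : ∀ i ∈ s₁, ∀ j ∈ s₁, i ≠ j → ∃ k ∈ s₀,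
      hypSub (A i) ⊓ hypSub (A j) ≤ hypSub (A k))
    (hunion : s₀ ∪ s₁ = Finset.univ)
    {x ℓ : Fin n → ℝ} (hx : x ∈ complementA A)
    (hl0 : ∀ k ∈ s₀, dotL (A k) ℓ = 0)
    (hl1 : ∀ i ∈ s₁, dotL (A i) ℓ ≠ 0)
    (hD : ∃ i ∈ s₁, dotL (A i) x * dotL (A i) ℓ < 0) :
    ∃ z ∈ complementA A, ∃ i₁ ∈ s₁,
      dotL (A i₁) x * dotL (A i₁) ℓ < 0 ∧
      dotL (A i₁) z * dotL (A i₁) x < 0 ∧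
      ∀ j : Fin m, j ≠ i₁ → 0 < dotL (A j) z * dotL (A j) x := by
  classical
  set D : Finset (Fin m) := s₁.filter (fun i => dotL (A i) x * dotL (A i) ℓ < 0) with hDdef
  have hDs₁ : ∀ i ∈ D, i ∈ s₁ := fun i hi => (Finset.mem_filter.mp hi).1
  have hDneg : ∀ i ∈ D, dotL (A i) x * dotL (A i) ℓ < 0 :=
    fun i hi => (Finset.mem_filter.mp hi).2
  have hDne : D.Nonempty := by
    obtain ⟨i, hi, hneg⟩ := hD
    exact ⟨i, Finset.mem_filter.mpr ⟨hi, hneg⟩⟩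
  set tt : Fin m → ℝ := fun i => -(dotL (A i) x) / (dotL (A i) ℓ) with httdef
  have htpos : ∀ i ∈ D, 0 < tt i := by
    intro i hi
    have hl := hl1 i (hDs₁ i hi)
    have hneg := hDneg i hi
    rcases lt_or_gt_of_ne hl with h | h
    · have hxpos : 0 < dotL (A i) x := by nlinarith
      exact div_pos_iff.mpr (Or.inr ⟨by linarith, h⟩)
    · have hxneg : dotL (A i) x < 0 := by nlinarith
      exact div_pos (by linarith) h
  have hzero : ∀ i ∈ D, dotL (A i) (x + tt i • ℓ) = 0 := by
    intro i hi
    rw [dotL_add_smul]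
    have hl := hl1 i (hDs₁ i hi)
    field_simp [httdef]
    simp only [httdef]; rw [div_mul_cancel₀ _ hl]; ring
  obtain ⟨i₁, hi₁D, hmin⟩ := D.exists_min_image tt hDne
  have hstrict : ∀ j ∈ D, j ≠ i₁ → tt i₁ < tt j := by
    intro j hj hne
    rcases (hmin j hj).lt_or_eq with h | h
    · exact h
    · exfalso
      obtain ⟨k, hk, hle⟩ := hBEZ i₁ (hDs₁ _ hi₁D) j (hDs₁ _ hj) (Ne.symm hne)
      have hp1 : dotL (A i₁) (x + tt i₁ • ℓ) = 0 := hzero _ hi₁D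
      have hp2 : dotL (A j) (x + tt i₁ • ℓ) = 0 := by rw [h]; exact hzero _ hj
      have hmem : x + tt i₁ • ℓ ∈ hypSub (A i₁) ⊓ hypSub (A j) :=
        Submodule.mem_inf.mpr ⟨LinearMap.mem_ker.mpr hp1, LinearMap.mem_ker.mpr hp2⟩
      have hk0 : dotL (A k) (x + tt i₁ • ℓ) = 0 := LinearMap.mem_ker.mp (hle hmem)
      rw [dotL_add_smul, hl0 k hk, mul_zero, add_zero] at hk0
      exact hx k hk0
  obtain ⟨t, ht1, ht2, ht0⟩ : ∃ t, tt i₁ < t ∧ (∀ j ∈ D, j ≠ i₁ → t < tt j) ∧ 0 < t := by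
    by_cases hE : (D.erase i₁).Nonempty
    · obtain ⟨j₂, hj₂, hminE⟩ := (D.erase i₁).exists_min_image tt hE
      have hj₂ne : j₂ ≠ i₁ := (Finset.mem_erase.mp hj₂).1
      have hj₂D : j₂ ∈ D := (Finset.mem_erase.mp hj₂).2
      have h12 : tt i₁ < tt j₂ := hstrict _ hj₂D hj₂ne
      refine ⟨(tt i₁ + tt j₂) / 2, by linarith, ?_, ?_⟩
      · intro j hj hne
        have := hminE j (Finset.mem_erase.mpr ⟨hne, hj⟩)
        linarith
      · have := htpos _ hi₁D; linarith
    · refine ⟨tt i₁ + 1, by linarith, ?_, by have := htpos _ hi₁D; linarith⟩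
      intro j hj hne
      exact absurd (Finset.mem_erase.mpr ⟨hne, hj⟩)
        (by rw [Finset.not_nonempty_iff_eq_empty.mp hE]; exact Finset.notMem_empty j)
  set z := x + t • ℓ with hzdef
  have hkey : ∀ j, dotL (A j) z * dotL (A j) x =
      dotL (A j) x ^ 2 + t * (dotL (A j) x * dotL (A j) ℓ) := by
    intro j; rw [dotL_add_smul]; ring
  have hsq : ∀ i ∈ D, dotL (A i) x ^ 2 = -(tt i) * (dotL (A i) x * dotL (A i) ℓ) := by
    intro i hi
    have hl := hl1 i (hDs₁ i hi)
    field_simp [httdef]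
    simp only [httdef]; rw [mul_assoc, div_mul_cancel₀ _ hl]
    ring
  have hprod : ∀ j, j ≠ i₁ → 0 < dotL (A j) z * dotL (A j) x := by
    intro j hne
    have hj : j ∈ s₀ ∪ s₁ := by rw [hunion]; exact Finset.mem_univ j
    rcases Finset.mem_union.mp hj with hj0 | hj1
    · have : dotL (A j) z = dotL (A j) x := by
        rw [dotL_add_smul, hl0 j hj0, mul_zero, add_zero]
      rw [this, ← sq]
      exact sq_pos' (hx j)
    · by_cases hjD : j ∈ D
      · have hlt := ht2 j hjD hne
        have := hsq j hjD
        have hnegj := hDneg j hjD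
        rw [hkey j, this]
        nlinarith
      · have hc : 0 < dotL (A j) x * dotL (A j) ℓ := by
        
        
          have hne0 : dotL (A j) x * dotL (A j) ℓ ≠ 0 :=
            mul_ne_zero (hx j) (hl1 j hj1)
          have : ¬ (dotL (A j) x * dotL (A j) ℓ < 0) := by
            intro hcon; exact hjD (Finset.mem_filter.mpr ⟨hj1, hcon⟩)
          rcases lt_or_gt_of_ne hne0 with h | h
          · exact absurd h this
          · exact h
        rw [hkey j]
        have hx2 : 0 < dotL (A j) x ^ 2 := sq_pos' (hx j)
        nlinarith
  have hi₁prod : dotL (A i₁) z * dotL (A i₁) x < 0 := by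
    have := hsq i₁ hi₁D
    have hnegj := hDneg i₁ hi₁D
    rw [hkey i₁, this]
    nlinarith
  have hzc : z ∈ complementA A := by
    intro j
    by_cases hji : j = i₁
    · subst hji
      intro h0; rw [h0, zero_mul] at hi₁prod; exact lt_irrefl 0 hi₁prod
    · intro h0; have := hprod j hji; rw [h0, zero_mul] at this; exact lt_irrefl 0 this
  exact ⟨z, hzc, i₁, hDs₁ _ hi₁D, hDneg _ hi₁D, hi₁prod, hprod⟩

end Eps

namespace Eps

variable {n : ℕ}

lemma exists_comb {f g h : (Fin n → ℝ) →ₗ[ℝ] ℝ} (hf : f ≠ 0) (hg : g ≠ 0)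
    (hker : LinearMap.ker f ≠ LinearMap.ker g)
    (hle : LinearMap.ker f ⊓ LinearMap.ker g ≤ LinearMap.ker h) :
    ∃ a b : ℝ, h = a • f + b • g := by
  obtain ⟨u0, hu0⟩ : ∃ u0, f u0 ≠ 0 := by
    by_contra hcon; push_neg at hcon
    exact hf (LinearMap.ext fun x => by rw [hcon x, LinearMap.zero_apply])
  obtain ⟨v0, hv0f, hv0g⟩ : ∃ v0, f v0 = 0 ∧ g v0 ≠ 0 := by
    by_contra hcon; push_neg at hcon
    have hrep : ∀ x, g x = (g u0 / f u0) * f x := by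
      intro x
      have hmem : f (x - (f x / f u0) • u0) = 0 := by
        rw [map_sub, map_smul, smul_eq_mul]
        field_simp
        ring
      have h2 := hcon _ hmem
      rw [map_sub, map_smul, smul_eq_mul, sub_eq_zero] at h2
      rw [h2]; field_simp
    have hgu0 : g u0 ≠ 0 := by
      intro h0
      apply hg
      exact LinearMap.ext fun x => by rw [hrep x, h0, zero_div, zero_mul, LinearMap.zero_apply]
    apply hker
    ext x
    simp only [LinearMap.mem_ker]
    constructor
    · intro h0
      rw [hrep x, h0, mul_zero]
    · intro h0
      have hrx := (hrep x).symm
      rw [h0] at hrx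
      rcases mul_eq_zero.mp hrx with h1 | h1
      · rcases div_eq_zero_iff.mp h1 with h' | h'
        · exact absurd h' hgu0
        · exact absurd h' hu0
      · exact h1
  have hgv0 : g v0 ≠ 0 := hv0g
  obtain ⟨v, hvf, hvg⟩ : ∃ v, f v = 0 ∧ g v = 1 :=
    ⟨(g v0)⁻¹ • v0, by rw [map_smul, hv0f, smul_zero], by
      rw [map_smul, smul_eq_mul]; field_simp⟩
  obtain ⟨u1, hu1f⟩ : ∃ u1, f u1 = 1 :=
    ⟨(f u0)⁻¹ • u0, by rw [map_smul, smul_eq_mul]; field_simp⟩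
  obtain ⟨u, huf, hug⟩ : ∃ u, f u = 1 ∧ g u = 0 :=
    ⟨u1 - g u1 • v, by
      rw [map_sub, map_smul, hvf, smul_zero, sub_zero, hu1f], by
      rw [map_sub, map_smul, hvg, smul_eq_mul, mul_one, sub_self]⟩
  refine ⟨h u, h v, ?_⟩
  refine LinearMap.ext fun x => ?_
  have hmem : x - f x • u - g x • v ∈ LinearMap.ker f ⊓ LinearMap.ker g := by
    refine Submodule.mem_inf.mpr ⟨LinearMap.mem_ker.mpr ?_, LinearMap.mem_ker.mpr ?_⟩
    · rw [map_sub, map_sub, map_smul, map_smul, huf, hvf, smul_eq_mul, smul_eq_mul,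
        mul_one, mul_zero, sub_zero, sub_self]
    · rw [map_sub, map_sub, map_smul, map_smul, hug, hvg, smul_eq_mul, smul_eq_mul,
        mul_zero, mul_one, sub_zero, sub_self]
  have h0 := LinearMap.mem_ker.mp (hle hmem)
  rw [map_sub, map_sub, map_smul, map_smul, sub_sub, sub_eq_zero] at h0
  rw [h0]
  simp only [LinearMap.add_apply, LinearMap.smul_apply, smul_eq_mul]
  ring

lemma keyPair {m : ℕ} {A : Fin m → Fin n → ℝ} (hA : ∀ i, A i ≠ 0)
    (hdist : ∀ i j : Fin m, i ≠ j → hypSub (A i) ≠ hypSub (A j))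
    {s₀ s₁ : Finset (Fin m)} (hdisj : Disjoint s₀ s₁)
    (hBEZ : ∀ i ∈ s₁, ∀ j ∈ s₁, i ≠ j → ∃ k ∈ s₀,
      hypSub (A i) ⊓ hypSub (A j) ≤ hypSub (A k))
    {i j : Fin m} (hi : i ∈ s₁) (hj : j ∈ s₁) (hij : i ≠ j)
    {ℓ : Fin n → ℝ} (hl0 : ∀ k ∈ s₀, dotL (A k) ℓ = 0)
    (hzi : dotL (A i) ℓ = 0) (hzj : dotL (A j) ℓ ≠ 0) : False := by
  obtain ⟨k, hk, hle⟩ := hBEZ i hi j hj hij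
  obtain ⟨a, b, hcomb⟩ := exists_comb (dotL_ne_zero (hA i)) (dotL_ne_zero (hA j))
    (hdist i j hij) hle
  have heval := congrArg (fun φ : (Fin n → ℝ) →ₗ[ℝ] ℝ => φ ℓ) hcomb
  simp only [LinearMap.add_apply, LinearMap.smul_apply, smul_eq_mul] at heval
  rw [hl0 k hk, hzi, mul_zero, zero_add] at heval
  have hb : b = 0 := by
    rcases mul_eq_zero.mp heval.symm with h | h
    · exact h
    · exact absurd h hzj
  rw [hb, zero_smul, add_zero] at hcomb
  have ha : a ≠ 0 := by
    intro h0
    rw [h0, zero_smul] at hcomb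
    exact dotL_ne_zero (hA k) hcomb
  have hkerEq : hypSub (A k) = hypSub (A i) := by
    show LinearMap.ker (dotL (A k)) = LinearMap.ker (dotL (A i))
    rw [hcomb]
    exact LinearMap.ker_smul _ a ha
  have hki : k ≠ i := fun h => (Finset.disjoint_left.mp hdisj hk) (h ▸ hi)
  exact hdist k i hki hkerEq

end Eps

namespace Eps

variable {n m : ℕ}

lemma orientation {A : Fin m → Fin n → ℝ} (hA : ∀ i, A i ≠ 0)
    (hdist : ∀ i j : Fin m, i ≠ j → hypSub (A i) ≠ hypSub (A j))
    {s₀ s₁ : Finset (Fin m)} (hdisj : Disjoint s₀ s₁) (hunion : s₀ ∪ s₁ = Finset.univ)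
    (hne : s₁.Nonempty) (hrank : 3 ≤ rankA A)
    (hrank₀ : rankA (fun i : s₀ => A i) = rankA A - 1)
    (hBEZ : ∀ i ∈ s₁, ∀ j ∈ s₁, i ≠ j → ∃ k ∈ s₀,
      hypSub (A i) ⊓ hypSub (A j) ≤ hypSub (A k))
    (B₀ : Set (Fin n → ℝ)) (hB₀ : isRegion A B₀)
    (hpos : ∀ i : Fin m, tope A B₀ i = true)
    (hend : ∃! S : Set (Fin n → ℝ), isRegion A S ∧
      (∀ i ∈ s₀, tope A S i = tope A B₀ i) ∧
      (∃! i : Fin m, tope A S i ≠ tope A B₀ i)) :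
    ∃ ℓ : Fin n → ℝ, (∀ k ∈ s₀, dotL (A k) ℓ = 0) ∧ ∀ i ∈ s₁, 0 < dotL (A i) ℓ := by
  -- Step 1: find ℓ₀ vanishing on A₀ but not on some hyperplane of A₁
  obtain ⟨ℓ₀, hl0, j₀, hj₀, hj₀ne⟩ :
      ∃ ℓ : Fin n → ℝ, (∀ k ∈ s₀, dotL (A k) ℓ = 0) ∧ ∃ j ∈ s₁, dotL (A j) ℓ ≠ 0 := by
    by_contra hcon
    push_neg at hcon
    have hinf : (⨅ i : Fin m, hypSub (A i)) = ⨅ i : {x // x ∈ s₀}, hypSub (A i.1) := by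
      apply le_antisymm
      · exact le_iInf fun i => iInf_le (fun i : Fin m => hypSub (A i)) i.1
      · intro x hx
        have hx' : ∀ k ∈ s₀, dotL (A k) x = 0 := by
          intro k hk
          exact LinearMap.mem_ker.mp (Submodule.mem_iInf _ |>.mp hx ⟨k, hk⟩)
        rw [Submodule.mem_iInf]
        intro i
        rcases Finset.mem_union.mp (by rw [hunion]; exact Finset.mem_univ i) with h | h
        · exact LinearMap.mem_ker.mpr (hx' i h)
        · exact LinearMap.mem_ker.mpr (hcon x hx' i h)
    have hrr : rankA (fun i : s₀ => A i) = rankA A := by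
      unfold rankA
      rw [hinf]
    omega
  -- Step 2: ℓ₀ is nonvanishing on every hyperplane of A₁
  have hl1 : ∀ j ∈ s₁, dotL (A j) ℓ₀ ≠ 0 := by
    intro j hj h0
    have hjj₀ : j ≠ j₀ := by
      intro h; rw [h] at h0; exact hj₀ne h0
    exact keyPair hA hdist hdisj hBEZ hj hj₀ hjj₀ hl0 h0 hj₀ne
  -- base point of B₀
  obtain ⟨x₀, hx₀, hB₀eq⟩ := hB₀
  have hB₀rw : B₀ = regionOf A x₀ := hB₀eq
  have hx₀pos : ∀ i : Fin m, 0 < dotL (A i) x₀ := by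
    intro i
    refine (tope_regionOf_true_iff hx₀ i).mp ?_
    rw [← hB₀rw]; exact hpos i
  -- Step 3: all signs of ℓ₀ on s₁ agree
  by_cases hallpos : ∀ j ∈ s₁, 0 < dotL (A j) ℓ₀
  · exact ⟨ℓ₀, hl0, hallpos⟩
  by_cases hallneg : ∀ j ∈ s₁, dotL (A j) ℓ₀ < 0
  · refine ⟨-ℓ₀, fun k hk => by rw [map_neg, hl0 k hk, neg_zero], fun i hi => ?_⟩
    rw [map_neg]
    have := hallneg i hi
    linarith
  -- mixed signs: contradiction with hend
  exfalso
  push_neg at hallpos hallneg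
  obtain ⟨jn, hjn, hjnle⟩ := hallpos
  obtain ⟨jp, hjp, hjpge⟩ := hallneg
  have hjnneg : dotL (A jn) ℓ₀ < 0 := lt_of_le_of_ne hjnle (hl1 jn hjn)
  have hjppos : 0 < dotL (A jp) ℓ₀ := lt_of_le_of_ne hjpge (Ne.symm (hl1 jp hjp))
  -- sweep in direction ℓ₀
  obtain ⟨z₁, hz₁, i₁, hi₁, hi₁neg, hi₁prod, hi₁rest⟩ :=
    sweep hBEZ hunion hx₀ hl0 hl1
      ⟨jn, hjn, mul_neg_of_pos_of_neg (hx₀pos jn) hjnneg⟩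
  -- sweep in direction -ℓ₀
  obtain ⟨z₂, hz₂, i₂, hi₂, hi₂neg, hi₂prod, hi₂rest⟩ :=
    sweep hBEZ hunion hx₀ (fun k hk => by rw [map_neg, hl0 k hk, neg_zero])
      (fun i hi => by rw [map_neg]; exact neg_ne_zero.mpr (hl1 i hi))
      ⟨jp, hjp, by rw [map_neg]; nlinarith [hx₀pos jp]⟩
  -- i₁ ≠ i₂
  have hi₁l : dotL (A i₁) ℓ₀ < 0 := by nlinarith [hx₀pos i₁]
  have hi₂l : 0 < dotL (A i₂) ℓ₀ := by
    rw [map_neg] at hi₂neg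
    nlinarith [hx₀pos i₂]
  have h12 : i₁ ≠ i₂ := fun h => by rw [h] at hi₁l; linarith
  -- the two neighbour regions
  have hP : ∀ (z : Fin n → ℝ) (i' : Fin m), i' ∈ s₁ → z ∈ complementA A →
      dotL (A i') z * dotL (A i') x₀ < 0 →
      (∀ j : Fin m, j ≠ i' → 0 < dotL (A j) z * dotL (A j) x₀) →
      (isRegion A (regionOf A z) ∧
        (∀ i ∈ s₀, tope A (regionOf A z) i = tope A B₀ i) ∧
        (∃! i : Fin m, tope A (regionOf A z) i ≠ tope A B₀ i)) := by
    intro z i' hi's hz hprod hrest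
    refine ⟨isRegion_regionOf hz, ?_, ⟨i', ?_, ?_⟩⟩
    · intro i hi
      have hii' : i ≠ i' := fun h =>
        (Finset.disjoint_left.mp hdisj hi) (h ▸ hi's)
      rw [hB₀rw]
      exact tope_eq_of_sign hz hx₀ (hrest i hii')
    · rw [hB₀rw]
      exact tope_ne_of_sign hz hx₀ hprod
    · intro i hdiff
      by_contra hii'
      rw [hB₀rw] at hdiff
      exact hdiff (tope_eq_of_sign hz hx₀ (hrest i hii'))
  obtain ⟨S, _, huniq⟩ := hend
  have h1 := huniq _ (hP z₁ i₁ hi₁ hz₁ hi₁prod hi₁rest)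
  have h2 := huniq _ (hP z₂ i₂ hi₂ hz₂ hi₂prod hi₂rest)
  have hSeq : regionOf A z₁ = regionOf A z₂ := by rw [h1, h2]
  have ht1 : tope A (regionOf A z₁) i₁ = false := by
    rw [tope_regionOf_false_iff hz₁ i₁]
    nlinarith [hx₀pos i₁]
  have ht2 : tope A (regionOf A z₂) i₁ = true := by
    rw [tope_regionOf_true_iff hz₂ i₁]
    have := hi₂rest i₁ h12
    nlinarith [hx₀pos i₁]
  rw [hSeq, ht2] at ht1
  exact absurd ht1 (by simp)

end Eps

namespace Eps

variable {n m : ℕ}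

lemma region_subset {A : Fin m → Fin n → ℝ} {s₀ : Finset (Fin m)} {y x : Fin n → ℝ}
    (hy : y ∈ complementA (fun i : s₀ => A i)) (hx : x ∈ complementA A)
    (h : ∀ k ∈ s₀, 0 < dotL (A k) y * dotL (A k) x) :
    regionOf A x ⊆ regionOf (fun i : s₀ => A i) y := by
  unfold regionOf
  rw [comp_eq_cell hx, comp_eq_cell hy]
  apply closure_mono
  intro w hw i
  have h1 : 0 < dotL (A i.1) x * dotL (A i.1) y := by
    have := h i.1 i.2; nlinarith
  exact sign_trans h1 (hw i.1)

lemma region_subset' {A : Fin m → Fin n → ℝ} {s₀ : Finset (Fin m)} {y x : Fin n → ℝ}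
    (hy : y ∈ complementA (fun i : s₀ => A i)) (hx : x ∈ complementA A)
    (h : regionOf A x ⊆ regionOf (fun i : s₀ => A i) y) :
    ∀ k ∈ s₀, 0 < dotL (A k) y * dotL (A k) x := by
  intro k hk
  have hmem : x ∈ regionOf (fun i : s₀ => A i) y := h (mem_regionOf hx)
  have h0 : 0 ≤ dotL (A k) y * dotL (A k) x := closure_comp_subset hy hmem ⟨k, hk⟩
  exact lt_of_le_of_ne h0 (Ne.symm (mul_ne_zero (hy ⟨k, hk⟩) (hx k)))

lemma sig_neg {σ a b : ℝ} (hσ : σ = 1 ∨ σ = -1) (ha : 0 < σ * a) (hab : a * b < 0) :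
    σ * b < 0 := by rcases hσ with rfl | rfl <;> nlinarith

lemma sig_pos {σ a b : ℝ} (hσ : σ = 1 ∨ σ = -1) (ha : 0 < σ * a) (hab : 0 < a * b) :
    0 < σ * b := by rcases hσ with rfl | rfl <;> nlinarith

lemma sig_mul_pos {σ a b : ℝ} (hσ : σ = 1 ∨ σ = -1) (ha : σ * a < 0) (hb : σ * b < 0) :
    0 < a * b := by rcases hσ with rfl | rfl <;> nlinarith

lemma sig_mul_pos' {σ a b : ℝ} (hσ : σ = 1 ∨ σ = -1) (ha : 0 < σ * a) (hb : 0 < σ * b) :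
    0 < a * b := by rcases hσ with rfl | rfl <;> nlinarith

lemma sign_of_tope_ne {A : Fin m → Fin n → ℝ} {x z : Fin n → ℝ} (hx : x ∈ complementA A)
    (hz : z ∈ complementA A) {i : Fin m}
    (h : tope A (regionOf A x) i ≠ tope A (regionOf A z) i) :
    dotL (A i) x * dotL (A i) z < 0 := by
  by_contra hcon
  push_neg at hcon
  have hne0 : dotL (A i) x * dotL (A i) z ≠ 0 := mul_ne_zero (hx i) (hz i)
  exact h (tope_eq_of_sign hx hz (lt_of_le_of_ne hcon (Ne.symm hne0)))

lemma sign_of_tope_eq {A : Fin m → Fin n → ℝ} {x z : Fin n → ℝ} (hx : x ∈ complementA A)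
    (hz : z ∈ complementA A) {i : Fin m}
    (h : tope A (regionOf A x) i = tope A (regionOf A z) i) :
    0 < dotL (A i) x * dotL (A i) z := by
  by_contra hcon
  push_neg at hcon
  have hne0 : dotL (A i) x * dotL (A i) z ≠ 0 := mul_ne_zero (hx i) (hz i)
  exact tope_ne_of_sign hx hz (lt_of_le_of_ne hcon hne0) h

lemma arith_pair {a b l1 l2 Z1 Z2 W1 W2 : ℝ} (h0 : a * l1 + b * l2 = 0)
    (hl1 : 0 < l1) (hl2 : 0 < l2) (ha : a ≠ 0)
    (hZ1 : Z1 < 0) (hZ2 : 0 < Z2) (hW1 : 0 < W1) (hW2 : W2 < 0)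
    (hP : 0 < (a * Z1 + b * Z2) * (a * W1 + b * W2)) : False := by
  rcases lt_or_gt_of_ne ha with h | h
  · have hb : 0 < b := by nlinarith
    have h1 : 0 < a * Z1 + b * Z2 := by nlinarith [mul_pos_of_neg_of_neg h hZ1, mul_pos hb hZ2]
    have h2 : a * W1 + b * W2 < 0 := by
      nlinarith [mul_neg_of_neg_of_pos h hW1, mul_neg_of_pos_of_neg hb hW2]
    nlinarith [mul_neg_of_pos_of_neg h1 h2]
  · have hb : b < 0 := by nlinarith
    have h1 : a * Z1 + b * Z2 < 0 := by
      nlinarith [mul_neg_of_pos_of_neg h hZ1, mul_neg_of_neg_of_pos hb hZ2]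
    have h2 : 0 < a * W1 + b * W2 := by
      nlinarith [mul_pos h hW1, mul_pos_of_neg_of_neg hb hW2]
    nlinarith [mul_neg_of_neg_of_pos h1 h2]

lemma endpoint {A : Fin m → Fin n → ℝ} (hA : ∀ i, A i ≠ 0)
    (hdist : ∀ i j : Fin m, i ≠ j → hypSub (A i) ≠ hypSub (A j))
    {s₀ s₁ : Finset (Fin m)} (hdisj : Disjoint s₀ s₁) (hunion : s₀ ∪ s₁ = Finset.univ)
    (hne : s₁.Nonempty)
    (hBEZ : ∀ i ∈ s₁, ∀ j ∈ s₁, i ≠ j → ∃ k ∈ s₀,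
      hypSub (A i) ⊓ hypSub (A j) ≤ hypSub (A k))
    {ℓ : Fin n → ℝ} (hl0 : ∀ k ∈ s₀, dotL (A k) ℓ = 0)
    (hl1 : ∀ i ∈ s₁, 0 < dotL (A i) ℓ)
    {y : Fin n → ℝ} (hy : y ∈ complementA (fun i : s₀ => A i))
    {x : Fin n → ℝ} (hx : x ∈ complementA A)
    (hx0 : ∀ k ∈ s₀, 0 < dotL (A k) y * dotL (A k) x)
    {σ : ℝ} (hσ : σ = 1 ∨ σ = -1)
    (hx1 : ∀ i ∈ s₁, 0 < σ * dotL (A i) x) :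
    ∃! S : Set (Fin n → ℝ), isRegion A S ∧ S ⊆ regionOf (fun i : s₀ => A i) y ∧
      (∃! i : Fin m, tope A S i ≠ tope A (regionOf A x) i) := by
  have hσ0 : σ ≠ 0 := by rcases hσ with rfl | rfl <;> norm_num
  -- sweep from x in direction -σ • ℓ
  obtain ⟨i0, hi0⟩ := hne
  obtain ⟨z, hz, i₁, hi₁, _, hi₁prod, hi₁rest⟩ :=
    sweep (x := x) (ℓ := (-σ) • ℓ) hBEZ hunion hx
      (fun k hk => by rw [map_smul, hl0 k hk, smul_zero])
      (fun i hi => by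
        rw [map_smul, smul_eq_mul]
        exact mul_ne_zero (by simpa using hσ0) (ne_of_gt (hl1 i hi)))
      ⟨i0, hi0, by
        rw [map_smul, smul_eq_mul]
        have := hx1 i0 hi0
        have := hl1 i0 hi0
        nlinarith⟩
  -- σ-signs of z on s₁
  have hzσ1 : σ * dotL (A i₁) z < 0 := sig_neg hσ (hx1 i₁ hi₁) (by nlinarith)
  have hzσ : ∀ j ∈ s₁, j ≠ i₁ → 0 < σ * dotL (A j) z := by
    intro j hj hne'
    exact sig_pos hσ (hx1 j hj) (by nlinarith [hi₁rest j hne'])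
  -- s₀ signs of z agree with y
  have hz0 : ∀ k ∈ s₀, 0 < dotL (A k) y * dotL (A k) z := by
    intro k hk
    have hki₁ : k ≠ i₁ := fun h => (Finset.disjoint_left.mp hdisj hk) (h ▸ hi₁)
    have h1 : 0 < dotL (A k) x * dotL (A k) z := by nlinarith [hi₁rest k hki₁]
    have h2 : 0 < dotL (A k) x * dotL (A k) y := by
      have := hx0 k hk; nlinarith
    exact sign_trans h2 h1
  refine ⟨regionOf A z, ⟨isRegion_regionOf hz, region_subset hy hz hz0, i₁, ?_, ?_⟩, ?_⟩
  · exact tope_ne_of_sign hz hx hi₁prod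
  · intro j hdiff
    by_contra hne'
    have hj : j ∈ s₀ ∪ s₁ := by rw [hunion]; exact Finset.mem_univ j
    exact hdiff (tope_eq_of_sign hz hx (hi₁rest j hne'))
  -- uniqueness
  intro S' hS'
  obtain ⟨⟨w, hw, hS'eq⟩, hS'sub, i₂, hdiff₂, huniq₂⟩ := hS'
  have hS'rw : S' = regionOf A w := hS'eq
  rw [hS'rw] at hS'sub hdiff₂ huniq₂ ⊢
  -- s₀ signs of w agree with y, hence with x
  have hw0 : ∀ k ∈ s₀, 0 < dotL (A k) y * dotL (A k) w := region_subset' hy hw hS'sub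
  have hwx0 : ∀ k ∈ s₀, 0 < dotL (A k) w * dotL (A k) x := by
    intro k hk
    have h2 : 0 < dotL (A k) y * dotL (A k) x := hx0 k hk
    exact sign_trans (hw0 k hk) h2
  -- the flip index i₂ lies in s₁
  have hi₂s₁ : i₂ ∈ s₁ := by
    rcases Finset.mem_union.mp (by rw [hunion]; exact Finset.mem_univ i₂) with h | h
    · exact absurd (tope_eq_of_sign hw hx (hwx0 i₂ h)) hdiff₂
    · exact h
  -- σ-signs of w
  have hwσ2 : σ * dotL (A i₂) w < 0 :=
    sig_neg hσ (hx1 i₂ hi₂s₁) (by nlinarith [sign_of_tope_ne hw hx hdiff₂])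
  have hwσ : ∀ j ∈ s₁, j ≠ i₂ → 0 < σ * dotL (A j) w := by
    intro j hj hne'
    have heq : tope A (regionOf A w) j = tope A (regionOf A x) j := by
      by_contra hd
      exact hne' (huniq₂ j hd)
    exact sig_pos hσ (hx1 j hj) (by nlinarith [sign_of_tope_eq hw hx heq])
  -- the flip index equals i₁
  have hi₂i₁ : i₂ = i₁ := by
    by_contra hne12
    obtain ⟨k, hk, hle⟩ := hBEZ i₁ hi₁ i₂ hi₂s₁ (fun h => hne12 h.symm)
    obtain ⟨a, b, hcomb⟩ := exists_comb (dotL_ne_zero (hA i₁)) (dotL_ne_zero (hA i₂))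
      (hdist i₁ i₂ (fun h => hne12 h.symm)) hle
    have heval : ∀ v : Fin n → ℝ, dotL (A k) v = a * dotL (A i₁) v + b * dotL (A i₂) v := by
      intro v
      have := congrArg (fun φ : (Fin n → ℝ) →ₗ[ℝ] ℝ => φ v) hcomb
      simpa [smul_eq_mul] using this
    have hlsum : a * dotL (A i₁) ℓ + b * dotL (A i₂) ℓ = 0 := by
      rw [← heval ℓ]; exact hl0 k hk
    have ha : a ≠ 0 := by
      intro h0
      rw [h0, zero_smul, zero_add] at hcomb
      have hb : b ≠ 0 := by
        intro hb0; rw [hb0, zero_smul] at hcomb; exact dotL_ne_zero (hA k) hcomb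
      have hker : hypSub (A k) = hypSub (A i₂) := by
        show LinearMap.ker (dotL (A k)) = LinearMap.ker (dotL (A i₂))
        rw [hcomb]; exact LinearMap.ker_smul _ b hb
      exact hdist k i₂ (fun h => (Finset.disjoint_left.mp hdisj hk) (h ▸ hi₂s₁)) hker
    have hkzw : 0 < dotL (A k) z * dotL (A k) w := sign_trans (hz0 k hk) (hw0 k hk)
    have hσ2 : σ * σ = 1 := by rcases hσ with rfl | rfl <;> norm_num
    have hP : 0 < (a * (σ * dotL (A i₁) z) + b * (σ * dotL (A i₂) z)) *
        (a * (σ * dotL (A i₁) w) + b * (σ * dotL (A i₂) w)) := by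
      have e1 : a * (σ * dotL (A i₁) z) + b * (σ * dotL (A i₂) z) = σ * dotL (A k) z := by
        rw [heval z]; ring
      have e2 : a * (σ * dotL (A i₁) w) + b * (σ * dotL (A i₂) w) = σ * dotL (A k) w := by
        rw [heval w]; ring
      rw [e1, e2]
      have e3 : (σ * dotL (A k) z) * (σ * dotL (A k) w) =
          (σ * σ) * (dotL (A k) z * dotL (A k) w) := by ring
      rw [e3, hσ2, one_mul]
      exact hkzw
    exact arith_pair hlsum (hl1 i₁ hi₁) (hl1 i₂ hi₂s₁) ha hzσ1
      (hzσ i₂ hi₂s₁ hne12) (hwσ i₁ hi₁ (fun h => hne12 h.symm)) hwσ2 hP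
  subst hi₂i₁
  refine regionOf_eq hw hz ?_
  intro i
  rcases Finset.mem_union.mp (by rw [hunion]; exact Finset.mem_univ i) with h | h
  · exact sign_trans (hw0 i h) (hz0 i h)
  · by_cases hii : i = i₂
    · subst hii
      exact sig_mul_pos hσ hwσ2 hzσ1
    · exact sig_mul_pos' hσ (hwσ i h hii) (hzσ i h hii)

end Eps

/-- ε-lemma. Let `A = A₀ ⊎ A₁` be a BEZ decomposition of a supersolvable central
arrangement, with all hyperplanes oriented positively towards a canonical base
region `B₀` (a region with all-positive tope which is an endpoint of the path
induced on its fiber). Then for every region `B` of `A₀`, the fiber `π⁻¹(B)`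
contains a unique region `ε₊(B)` whose `A₁`-signs are all positive and a unique
region `ε₋(B)` whose `A₁`-signs are all negative, and these two regions are the
endpoints of the fiber path: each has exactly one tope-graph neighbour inside the
fiber. -/
theorem stmt15 {n m : ℕ} (A : Fin m → Fin n → ℝ) (hA : ∀ i, A i ≠ 0)
    (hdist : ∀ i j : Fin m, i ≠ j → hypSub (A i) ≠ hypSub (A j))
    (s₀ s₁ : Finset (Fin m)) (hdisj : Disjoint s₀ s₁) (hunion : s₀ ∪ s₁ = Finset.univ)
    (hne : s₁.Nonempty) (hrank : 3 ≤ rankA A)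
    (hrank₀ : rankA (fun i : s₀ => A i) = rankA A - 1)
    (hss₀ : IsSupersolvable (fun i : s₀ => A i))
    (hBEZ : ∀ i ∈ s₁, ∀ j ∈ s₁, i ≠ j → ∃ k ∈ s₀,
      hypSub (A i) ⊓ hypSub (A j) ≤ hypSub (A k))
    (B₀ : Set (Fin n → ℝ)) (hB₀ : isRegion A B₀)
    (hpos : ∀ i : Fin m, tope A B₀ i = true)
    (hend : ∃! S : Set (Fin n → ℝ), isRegion A S ∧
      (∀ i ∈ s₀, tope A S i = tope A B₀ i) ∧
      (∃! i : Fin m, tope A S i ≠ tope A B₀ i)) :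
    ∀ B : Set (Fin n → ℝ), isRegion (fun i : s₀ => A i) B →
      (∃! Rp : Set (Fin n → ℝ), isRegion A Rp ∧ Rp ⊆ B ∧
        ∀ i ∈ s₁, tope A Rp i = true) ∧
      (∃! Rm : Set (Fin n → ℝ), isRegion A Rm ∧ Rm ⊆ B ∧
        ∀ i ∈ s₁, tope A Rm i = false) ∧
      (∀ R : Set (Fin n → ℝ),
        ((isRegion A R ∧ R ⊆ B ∧ ∀ i ∈ s₁, tope A R i = true) ∨
         (isRegion A R ∧ R ⊆ B ∧ ∀ i ∈ s₁, tope A R i = false)) →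
        ∃! S : Set (Fin n → ℝ), isRegion A S ∧ S ⊆ B ∧
          (∃! i : Fin m, tope A S i ≠ tope A R i)) := by
  intro B hB
  obtain ⟨ℓ, hl0, hl1⟩ :=
    Eps.orientation hA hdist hdisj hunion hne hrank hrank₀ hBEZ B₀ hB₀ hpos hend
  obtain ⟨y, hy, hBeq⟩ := hB
  have hBrw : B = Eps.regionOf (fun i : s₀ => A i) y := hBeq
  have hmemA : ∀ x : Fin n → ℝ, (∀ k ∈ s₀, dotL (A k) x ≠ 0) →
      (∀ i ∈ s₁, dotL (A i) x ≠ 0) → x ∈ complementA A := by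
    intro x h0 h1 i
    rcases Finset.mem_union.mp (by rw [hunion]; exact Finset.mem_univ i) with h | h
    · exact h0 i h
    · exact h1 i h
  have hray : ∀ t : ℝ, ∀ k ∈ s₀, dotL (A k) (y + t • ℓ) = dotL (A k) y := by
    intro t k hk
    rw [Eps.dotL_add_smul, hl0 k hk, mul_zero, add_zero]
  -- the all-positive far point in the fibre of B
  have hfarp : ∃ p : Fin n → ℝ, p ∈ complementA A ∧
      (∀ k ∈ s₀, dotL (A k) p = dotL (A k) y) ∧ ∀ i ∈ s₁, 0 < dotL (A i) p := by
    set T := 1 + s₁.sup' hne (fun i => -dotL (A i) y / dotL (A i) ℓ) with hT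
    have hp1 : ∀ i ∈ s₁, 0 < dotL (A i) (y + T • ℓ) := by
      intro i hi
      have hli := hl1 i hi
      have hsup : -dotL (A i) y / dotL (A i) ℓ ≤
          s₁.sup' hne (fun i => -dotL (A i) y / dotL (A i) ℓ) :=
        Finset.le_sup' (fun i => -dotL (A i) y / dotL (A i) ℓ) hi
      have hlt : -dotL (A i) y / dotL (A i) ℓ < T := by rw [hT]; linarith
      rw [Eps.dotL_add_smul]
      have := (div_lt_iff₀ hli).mp hlt
      linarith
    exact ⟨y + T • ℓ,
      hmemA _ (fun k hk => by rw [hray T k hk]; exact hy ⟨k, hk⟩)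
        (fun i hi => ne_of_gt (hp1 i hi)), hray T, hp1⟩
  -- the all-negative far point in the fibre of B
  have hfarm : ∃ p : Fin n → ℝ, p ∈ complementA A ∧
      (∀ k ∈ s₀, dotL (A k) p = dotL (A k) y) ∧ ∀ i ∈ s₁, dotL (A i) p < 0 := by
    set T := s₁.inf' hne (fun i => -dotL (A i) y / dotL (A i) ℓ) - 1 with hT
    have hp1 : ∀ i ∈ s₁, dotL (A i) (y + T • ℓ) < 0 := by
      intro i hi
      have hli := hl1 i hi
      have hinf : s₁.inf' hne (fun i => -dotL (A i) y / dotL (A i) ℓ) ≤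
          -dotL (A i) y / dotL (A i) ℓ :=
        Finset.inf'_le (fun i => -dotL (A i) y / dotL (A i) ℓ) hi
      have hlt : T < -dotL (A i) y / dotL (A i) ℓ := by rw [hT]; linarith
      rw [Eps.dotL_add_smul]
      have := (lt_div_iff₀ hli).mp hlt
      linarith
    exact ⟨y + T • ℓ,
      hmemA _ (fun k hk => by rw [hray T k hk]; exact hy ⟨k, hk⟩)
        (fun i hi => ne_of_lt (hp1 i hi)), hray T, hp1⟩
  obtain ⟨p, hp, hp0, hp1⟩ := hfarp
  obtain ⟨q, hq, hq0, hq1⟩ := hfarm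
  have hyp0 : ∀ k ∈ s₀, 0 < dotL (A k) y * dotL (A k) p := by
    intro k hk; rw [hp0 k hk]; exact mul_self_pos.mpr (hy ⟨k, hk⟩)
  have hyq0 : ∀ k ∈ s₀, 0 < dotL (A k) y * dotL (A k) q := by
    intro k hk; rw [hq0 k hk]; exact mul_self_pos.mpr (hy ⟨k, hk⟩)
  refine ⟨?_, ?_, ?_⟩
  · -- ε₊ : unique all-positive region in the fibre
    refine ⟨Eps.regionOf A p, ⟨Eps.isRegion_regionOf hp,
      by rw [hBrw]; exact Eps.region_subset hy hp hyp0,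
      fun i hi => (Eps.tope_regionOf_true_iff hp i).mpr (hp1 i hi)⟩, ?_⟩
    intro S hS
    obtain ⟨⟨w, hw, hSeq⟩, hSsub, hStope⟩ := hS
    have hSrw : S = Eps.regionOf A w := hSeq
    rw [hSrw] at hSsub hStope ⊢
    rw [hBrw] at hSsub
    have hw0 : ∀ k ∈ s₀, 0 < dotL (A k) y * dotL (A k) w :=
      Eps.region_subset' hy hw hSsub
    refine Eps.regionOf_eq hw hp ?_
    intro i
    rcases Finset.mem_union.mp (by rw [hunion]; exact Finset.mem_univ i) with h | h
    · exact Eps.sign_trans (hw0 i h) (hyp0 i h)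
    · exact mul_pos ((Eps.tope_regionOf_true_iff hw i).mp (hStope i h)) (hp1 i h)
  · -- ε₋ : unique all-negative region in the fibre
    refine ⟨Eps.regionOf A q, ⟨Eps.isRegion_regionOf hq,
      by rw [hBrw]; exact Eps.region_subset hy hq hyq0,
      fun i hi => (Eps.tope_regionOf_false_iff hq i).mpr (hq1 i hi)⟩, ?_⟩
    intro S hS
    obtain ⟨⟨w, hw, hSeq⟩, hSsub, hStope⟩ := hS
    have hSrw : S = Eps.regionOf A w := hSeq
    rw [hSrw] at hSsub hStope ⊢
    rw [hBrw] at hSsub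
    have hw0 : ∀ k ∈ s₀, 0 < dotL (A k) y * dotL (A k) w :=
      Eps.region_subset' hy hw hSsub
    refine Eps.regionOf_eq hw hq ?_
    intro i
    rcases Finset.mem_union.mp (by rw [hunion]; exact Finset.mem_univ i) with h | h
    · exact Eps.sign_trans (hw0 i h) (hyq0 i h)
    · exact mul_pos_of_neg_of_neg
        ((Eps.tope_regionOf_false_iff hw i).mp (hStope i h)) (hq1 i h)
  · -- the endpoints have a unique neighbour in the fibre
    intro R hR
    rcases hR with ⟨hRreg, hRsub, hRtope⟩ | ⟨hRreg, hRsub, hRtope⟩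
    · obtain ⟨x, hx, hReq⟩ := hRreg
      have hRrw : R = Eps.regionOf A x := hReq
      rw [hRrw] at hRsub hRtope ⊢
      rw [hBrw] at hRsub ⊢
      have hx0 : ∀ k ∈ s₀, 0 < dotL (A k) y * dotL (A k) x :=
        Eps.region_subset' hy hx hRsub
      have hx1 : ∀ i ∈ s₁, 0 < (1 : ℝ) * dotL (A i) x := by
        intro i hi
        rw [one_mul]
        exact (Eps.tope_regionOf_true_iff hx i).mp (hRtope i hi)
      exact Eps.endpoint hA hdist hdisj hunion hne hBEZ hl0 hl1 hy hx hx0 (Or.inl rfl) hx1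
    · obtain ⟨x, hx, hReq⟩ := hRreg
      have hRrw : R = Eps.regionOf A x := hReq
      rw [hRrw] at hRsub hRtope ⊢
      rw [hBrw] at hRsub ⊢
      have hx0 : ∀ k ∈ s₀, 0 < dotL (A k) y * dotL (A k) x :=
        Eps.region_subset' hy hx hRsub
      have hx1 : ∀ i ∈ s₁, 0 < (-1 : ℝ) * dotL (A i) x := by
        intro i hi
        have := (Eps.tope_regionOf_false_iff hx i).mp (hRtope i hi)
        nlinarith
      exact Eps.endpoint hA hdist hdisj hunion hne hBEZ hl0 hl1 hy hx hx0 (Or.inr rfl) hx1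
end
end

section
/- Under the hypotheses of the ε-lemma for supersolvable arrangements, if regions B and B' of A₀ are adjacent in the tope graph of A₀, then ε₊(B) is adjacent to ε₊(B') and ε₋(B) is adjacent to ε₋(B') in the tope graph of A. -/
noncomputable section

lemma region_halfspace {n : ℕ} {ι : Type*} (A : ι → Fin n → ℝ) {B : Set (Fin n → ℝ)}
    (hB : isRegion A B) (i : ι) :
    B ⊆ {x | 0 ≤ dotL (A i) x} ∨ B ⊆ {x | dotL (A i) x ≤ 0} := by
  obtain ⟨x, hx, rfl⟩ := hB
  set C := connectedComponentIn (complementA A) x with hC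
  have hCconn : IsPreconnected C := (isPreconnected_connectedComponentIn)
  have hcont : Continuous (dotL (A i)) := (dotL (A i)).continuous_of_finiteDimensional
  have hne0 : ∀ y ∈ C, dotL (A i) y ≠ 0 := fun y hy =>
    (connectedComponentIn_subset _ _ hy) i
  have key : (∀ y ∈ C, 0 ≤ dotL (A i) y) ∨ (∀ y ∈ C, dotL (A i) y ≤ 0) := by
    by_contra h
    push_neg at h
    obtain ⟨⟨a, ha, ha'⟩, ⟨b, hb, hb'⟩⟩ := h
    have h0 : (0 : ℝ) ∈ Set.Icc (dotL (A i) a) (dotL (A i) b) :=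
      ⟨le_of_lt (by linarith), by linarith⟩
    have := hCconn.intermediate_value ha hb hcont.continuousOn h0
    obtain ⟨y, hy, hy0⟩ := this
    exact hne0 y hy hy0
  rcases key with h | h
  · left
    exact closure_minimal (fun y hy => h y hy)
      (isClosed_le continuous_const hcont)
  · right
    exact closure_minimal (fun y hy => h y hy)
      (isClosed_le hcont continuous_const)

lemma tope_sub {n m : ℕ} (A : Fin m → Fin n → ℝ) (s₀ : Finset (Fin m))
    {B R : Set (Fin n → ℝ)} (hB : isRegion (fun i : s₀ => A i) B)
    (hR : isRegion A R) (hRB : R ⊆ B) (i : s₀) :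
    tope A R i.1 = tope (fun i : s₀ => A i) B i := by
  unfold tope
  rw [decide_eq_decide]
  constructor
  · intro hP
    by_contra hQ
    rcases region_halfspace (fun i : s₀ => A i) hB i with h | h
    · exact hQ h
    · obtain ⟨y, hy, hyR⟩ := hR
      have hyin : y ∈ R := hyR ▸ subset_closure (mem_connectedComponentIn hy)
      have h1 : 0 ≤ dotL (A i.1) y := hP hyin
      have h2 : dotL (A i.1) y ≤ 0 := h (hRB hyin)
      exact hy i.1 (le_antisymm h2 h1)
  · intro hQ
    exact fun y hy => hQ (hRB hy)

/-- Under the hypotheses of the ε-lemma, if regions `B` and `B'` of `A₀` are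
adjacent in the tope graph of `A₀`, then `ε₊(B)` is adjacent to `ε₊(B')` and
`ε₋(B)` is adjacent to `ε₋(B')` in the tope graph of `A` (here `ε₊(B)` resp.
`ε₋(B)` is a region of `A` contained in `B` whose `A₁`-signs are all positive
resp. all negative, and adjacency means the topes differ in exactly one
hyperplane). -/
theorem stmt16 {n m : ℕ} (A : Fin m → Fin n → ℝ) (hA : ∀ i, A i ≠ 0)
    (hdist : ∀ i j : Fin m, i ≠ j → hypSub (A i) ≠ hypSub (A j))
    (s₀ s₁ : Finset (Fin m)) (hdisj : Disjoint s₀ s₁) (hunion : s₀ ∪ s₁ = Finset.univ)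
    (hne : s₁.Nonempty) (hrank : 3 ≤ rankA A)
    (hrank₀ : rankA (fun i : s₀ => A i) = rankA A - 1)
    (hss₀ : IsSupersolvable (fun i : s₀ => A i))
    (hBEZ : ∀ i ∈ s₁, ∀ j ∈ s₁, i ≠ j → ∃ k ∈ s₀,
      hypSub (A i) ⊓ hypSub (A j) ≤ hypSub (A k))
    (B₀ : Set (Fin n → ℝ)) (hB₀ : isRegion A B₀)
    (hpos : ∀ i : Fin m, tope A B₀ i = true)
    (hend : ∃! S : Set (Fin n → ℝ), isRegion A S ∧
      (∀ i ∈ s₀, tope A S i = tope A B₀ i) ∧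
      (∃! i : Fin m, tope A S i ≠ tope A B₀ i))
    (B B' : Set (Fin n → ℝ))
    (hB : isRegion (fun i : s₀ => A i) B) (hB' : isRegion (fun i : s₀ => A i) B')
    (hadj : ∃! i : s₀, tope (fun i : s₀ => A i) B i ≠ tope (fun i : s₀ => A i) B' i) :
    ∀ (sgn : Bool) (R R' : Set (Fin n → ℝ)),
      (isRegion A R ∧ R ⊆ B ∧ ∀ i ∈ s₁, tope A R i = sgn) →
      (isRegion A R' ∧ R' ⊆ B' ∧ ∀ i ∈ s₁, tope A R' i = sgn) →
      ∃! i : Fin m, tope A R i ≠ tope A R' i := by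
  rintro sgn R R' ⟨hR, hRB, hRs⟩ ⟨hR', hR'B, hR's⟩
  obtain ⟨i₀, hi₀, huniq⟩ := hadj
  refine ⟨i₀.1, ?_, ?_⟩
  · show tope A R i₀.1 ≠ tope A R' i₀.1
    rw [tope_sub A s₀ hB hR hRB i₀, tope_sub A s₀ hB' hR' hR'B i₀]
    exact hi₀
  · intro j hj
    have hjmem : j ∈ s₀ ∪ s₁ := hunion ▸ Finset.mem_univ j
    rcases Finset.mem_union.mp hjmem with hj0 | hj1
    · have : tope (fun i : s₀ => A i) B ⟨j, hj0⟩ ≠ tope (fun i : s₀ => A i) B' ⟨j, hj0⟩ := by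
        rw [← tope_sub A s₀ hB hR hRB ⟨j, hj0⟩, ← tope_sub A s₀ hB' hR' hR'B ⟨j, hj0⟩]
        exact hj
      have := huniq ⟨j, hj0⟩ this
      exact congrArg Subtype.val this
    · exact absurd (by rw [hRs j hj1, hR's j hj1]) hj
end
end
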